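/- arXiv:2203.16812 — 6 statements merged into one kernel-verified Lean document; each statement's English description precedes it below -/
import Mathlib

section
/- For every natural number n and every complex number y, the identity \sum_{d=0}^{\lfloor n/2 \rfloor} \frac{n!}{(d!)^2 (n-2d)!} y^d (1+y)^{n-2d} = \sum_{d=0}^{n} \binom{n}{d}^2 y^d holds. -/
open Finset


-- trinomial revision in explicit form (no subtraction)
lemma t1 (d e m : ℕ) :
    (2*d+e+m).choose d * (d+e+m).choose d * (e+m).choose e
      = (2*d+e+m).choose (d+e) * ((d+e).choose d * (d+m).choose d) := by
  have h1 : d ≤ 2*d+e+m := by omega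
  have h2 : d ≤ d+e+m := by omega
  have h3 : e ≤ e+m := by omega
  have h4 : d+e ≤ 2*d+e+m := by omega
  have h5 : d ≤ d+e := by omega
  have h6 : d ≤ d+m := by omega
  have := Nat.choose_mul_factorial_mul_factorial h1
  have := Nat.choose_mul_factorial_mul_factorial h2
  have := Nat.choose_mul_factorial_mul_factorial h3
  have := Nat.choose_mul_factorial_mul_factorial h4
  have := Nat.choose_mul_factorial_mul_factorial h5
  have := Nat.choose_mul_factorial_mul_factorial h6
  have key : ((2*d+e+m).choose d * (d+e+m).choose d * (e+m).choose e : ℚ)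
      = ((2*d+e+m).choose (d+e) * ((d+e).choose d * (d+m).choose d) : ℚ) := by
    rw [Nat.cast_choose ℚ h1, Nat.cast_choose ℚ h2, Nat.cast_choose ℚ h3,
      Nat.cast_choose ℚ h4, Nat.cast_choose ℚ h5, Nat.cast_choose ℚ h6]
    have e1 : 2*d+e+m - d = d+e+m := by omega
    have e2 : d+e+m - d = e+m := by omega
    have e3 : e+m - e = m := by omega
    have e4 : 2*d+e+m - (d+e) = d+m := by omega
    have e5 : d+e - d = e := by omega
    have e6 : d+m - d = m := by omega
    rw [e1, e2, e3, e4, e5, e6]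
    have f1 : ((Nat.factorial d : ℚ)) ≠ 0 := Nat.cast_ne_zero.2 (Nat.factorial_ne_zero d)
    have f2 : ((Nat.factorial e : ℚ)) ≠ 0 := Nat.cast_ne_zero.2 (Nat.factorial_ne_zero e)
    have f3 : ((Nat.factorial m : ℚ)) ≠ 0 := Nat.cast_ne_zero.2 (Nat.factorial_ne_zero m)
    have f4 : ((Nat.factorial (d+e+m) : ℚ)) ≠ 0 := Nat.cast_ne_zero.2 (Nat.factorial_ne_zero _)
    have f5 : ((Nat.factorial (e+m) : ℚ)) ≠ 0 := Nat.cast_ne_zero.2 (Nat.factorial_ne_zero _)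
    have f6 : ((Nat.factorial (d+e) : ℚ)) ≠ 0 := Nat.cast_ne_zero.2 (Nat.factorial_ne_zero _)
    have f7 : ((Nat.factorial (d+m) : ℚ)) ≠ 0 := Nat.cast_ne_zero.2 (Nat.factorial_ne_zero _)
    field_simp
  exact_mod_cast key


lemma vdm {n k : ℕ} (hk : k ≤ n) :
    n.choose k = ∑ d ∈ range (k+1), k.choose d * (n-k).choose d := by
  have h := Nat.add_choose_eq k (n-k) k
  rw [Nat.add_sub_cancel' hk] at h
  rw [h, Finset.Nat.sum_antidiagonal_eq_sum_range_succ_mk]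
  rw [← Finset.sum_range_reflect]
  apply Finset.sum_congr rfl
  intro d hd
  simp only [mem_range] at hd
  have h1 : k + 1 - 1 - d = k - d := by omega
  rw [h1, Nat.choose_symm (by omega), show k - (k - d) = d by omega]



lemma termB {n k d : ℕ} (hd : d ≤ k) (hk : k ≤ n) :
    n.choose d * (n-d).choose d * (n-2*d).choose (k-d)
      = n.choose k * (k.choose d * (n-k).choose d) := by
  rcases le_or_gt (d + k) n with h | h
  · obtain ⟨e, rfl⟩ : ∃ e, k = d + e := ⟨k - d, by omega⟩
    obtain ⟨m, rfl⟩ : ∃ m, n = 2*d + e + m := ⟨n - (d+e) - d, by omega⟩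
    rw [show 2*d+e+m - d = d+e+m by omega, show 2*d+e+m - 2*d = e+m by omega,
      show d+e-d = e by omega, show 2*d+e+m - (d+e) = d+m by omega]
    exact t1 d e m
  · have hz : (n-k).choose d = 0 := Nat.choose_eq_zero_of_lt (by omega)
    rcases le_or_gt (2*d) n with h2 | h2
    · have hz2 : (n-2*d).choose (k-d) = 0 := Nat.choose_eq_zero_of_lt (by omega)
      simp [hz, hz2]
    · have hz2 : (n-d).choose d = 0 := Nat.choose_eq_zero_of_lt (by omega)
      simp [hz, hz2]


lemma lemB {n k : ℕ} (hk : k ≤ n) :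
    n.choose k ^ 2 = ∑ d ∈ range (k+1),
      n.choose d * (n-d).choose d * (n-2*d).choose (k-d) := by
  rw [sq]
  nth_rewrite 2 [vdm hk]
  rw [Finset.mul_sum]
  apply Finset.sum_congr rfl
  intro d hd
  simp only [mem_range] at hd
  rw [termB (by omega) hk]


lemma coefC (n d : ℕ) (h : 2*d ≤ n) :
    (n.factorial : ℂ) / ((d.factorial : ℂ) ^ 2 * ((n - 2 * d).factorial : ℂ))
      = ((n.choose d * (n-d).choose d : ℕ) : ℂ) := by
  have h1 : d ≤ n := by omega
  have h2 : d ≤ n - d := by omega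
  have e1 := Nat.choose_mul_factorial_mul_factorial h1
  have e2 := Nat.choose_mul_factorial_mul_factorial h2
  rw [show n - d - d = n - 2*d by omega] at e2
  have key : (n.factorial : ℂ)
      = ((n.choose d * (n-d).choose d : ℕ) : ℂ)
        * ((d.factorial : ℂ)^2 * ((n-2*d).factorial : ℂ)) := by
    push_cast
    rw [← e1, ← e2]
    push_cast
    ring
  rw [key]
  have f1 : ((d.factorial : ℂ))^2 * ((n-2*d).factorial : ℂ) ≠ 0 := by
    apply mul_ne_zero
    · exact pow_ne_zero _ (Nat.cast_ne_zero.2 (Nat.factorial_ne_zero d))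
    · exact Nat.cast_ne_zero.2 (Nat.factorial_ne_zero _)
  field_simp
  rw [mul_assoc, mul_div_cancel_right₀ _ (mul_ne_zero (Nat.cast_ne_zero.2 (Nat.factorial_ne_zero _)) (Nat.cast_ne_zero.2 (Nat.factorial_ne_zero _)))]




/-- For every natural number `n` and every complex number `y`,
`∑_{d=0}^{⌊n/2⌋} n!/((d!)^2 (n-2d)!) y^d (1+y)^{n-2d} = ∑_{d=0}^{n} (n choose d)^2 y^d`. -/
theorem stmt0 (n : ℕ) (y : ℂ) :
    ∑ d ∈ Finset.range (n / 2 + 1),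
      (n.factorial : ℂ) / ((d.factorial : ℂ) ^ 2 * ((n - 2 * d).factorial : ℂ))
        * y ^ d * (1 + y) ^ (n - 2 * d)
    = ∑ d ∈ Finset.range (n + 1), ((n.choose d : ℂ)) ^ 2 * y ^ d := by
  set g : ℕ → ℕ → ℂ := fun d j =>
    ((n.choose d * (n-d).choose d * (n-2*d).choose j : ℕ) : ℂ) * y ^ (d+j) with hg
  -- LHS as a double sum
  have stepA : ∑ d ∈ Finset.range (n / 2 + 1),
      (n.factorial : ℂ) / ((d.factorial : ℂ) ^ 2 * ((n - 2 * d).factorial : ℂ))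
        * y ^ d * (1 + y) ^ (n - 2 * d)
      = ∑ d ∈ range (n+1), ∑ j ∈ range (n+1), g d j := by
    have e1 : ∑ d ∈ Finset.range (n / 2 + 1),
        (n.factorial : ℂ) / ((d.factorial : ℂ) ^ 2 * ((n - 2 * d).factorial : ℂ))
          * y ^ d * (1 + y) ^ (n - 2 * d)
        = ∑ d ∈ range (n+1),
            ((n.choose d * (n-d).choose d : ℕ) : ℂ) * y ^ d * (1 + y) ^ (n - 2*d) := by
      have ec : ∀ d ∈ range (n/2+1),
          (n.factorial : ℂ) / ((d.factorial : ℂ) ^ 2 * ((n - 2 * d).factorial : ℂ))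
            * y ^ d * (1 + y) ^ (n - 2 * d)
          = ((n.choose d * (n-d).choose d : ℕ) : ℂ) * y ^ d * (1 + y) ^ (n - 2*d) := by
        intro d hd
        simp only [mem_range] at hd
        rw [coefC n d (by omega)]
      rw [Finset.sum_congr rfl ec]
      apply Finset.sum_subset (Finset.range_subset_range.2 (show n/2+1 ≤ n+1 by omega))
      intro d hd hnd
      simp only [mem_range] at hd hnd
      have : (n-d).choose d = 0 := Nat.choose_eq_zero_of_lt (by omega)
      simp [this]
    rw [e1]
    apply Finset.sum_congr rfl
    intro d hd
    rw [show (1 + y) = (y + 1) by ring, add_pow]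
    simp only [one_pow, mul_one]
    rw [Finset.mul_sum]
    rw [Finset.sum_subset (Finset.range_subset_range.2 (show n - 2*d + 1 ≤ n + 1 by omega))]
    · apply Finset.sum_congr rfl
      intro j hj
      simp only [hg]
      push_cast
      ring
    · intro j hj hnj
      simp only [mem_range] at hj hnj
      have : (n-2*d).choose j = 0 := Nat.choose_eq_zero_of_lt (by omega)
      simp [this]
  -- RHS as a triangular sum
  have stepC : ∑ d ∈ Finset.range (n + 1), ((n.choose d : ℂ)) ^ 2 * y ^ d
      = ∑ k ∈ range (n+1), ∑ d ∈ range (k+1), g d (k-d) := by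
    apply Finset.sum_congr rfl
    intro k hk
    simp only [mem_range] at hk
    have : ((n.choose k : ℂ))^2 = ((n.choose k ^ 2 : ℕ) : ℂ) := by push_cast; ring
    rw [this, lemB (show k ≤ n by omega)]
    push_cast
    rw [Finset.sum_mul]
    apply Finset.sum_congr rfl
    intro d hd
    simp only [mem_range] at hd
    simp only [hg]
    rw [show d + (k - d) = k by omega]
    push_cast
    ring
  rw [stepA, stepC]
  -- reindex: double sum over the square = sum over triangle
  have hvanish : ∀ p : ℕ × ℕ, n < p.1 + p.2 → g p.1 p.2 = 0 := by
    intro p hp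
    simp only [hg]
    rcases le_or_gt (2 * p.1) n with h2 | h2
    · have : (n - 2*p.1).choose p.2 = 0 := Nat.choose_eq_zero_of_lt (by omega)
      simp [this]
    · have : (n - p.1).choose p.1 = 0 := Nat.choose_eq_zero_of_lt (by omega)
      simp [this]
  rw [← Finset.sum_product']
  have hsub : (range (n+1)).biUnion (fun k => Finset.HasAntidiagonal.antidiagonal k)
      ⊆ range (n+1) ×ˢ range (n+1) := by
    intro p hp
    simp only [mem_biUnion, mem_range, Finset.HasAntidiagonal.mem_antidiagonal] at hp
    obtain ⟨k, hk, hpk⟩ := hp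
    simp only [mem_product, mem_range]
    omega
  rw [← Finset.sum_subset hsub]
  · rw [Finset.sum_biUnion]
    · apply Finset.sum_congr rfl
      intro k hk
      rw [Finset.Nat.sum_antidiagonal_eq_sum_range_succ_mk]
    · intro a ha b hb hab
      simp only [Finset.disjoint_left]
      intro p hpa hpb
      simp only [Finset.HasAntidiagonal.mem_antidiagonal] at hpa hpb
      exact hab (hpa ▸ hpb)
  · intro p hp hnp
    apply hvanish
    simp only [mem_biUnion, mem_range, Finset.HasAntidiagonal.mem_antidiagonal, not_exists, not_and] at hnp
    by_contra hle
    push_neg at hle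
    exact hnp (p.1 + p.2) (by omega) rfl
end

section
/- For every natural number k and every complex number y, the identity \sum_{d=0}^{\lfloor k/2 \rfloor} \frac{k!}{(d!)^2 (k-2d)!} H_d\, y^d (1+y)^{k-2d} = \sum_{d=0}^{k} \binom{k}{d}^2 (H_d - H_k + H_{k-d})\, y^d holds, where H_m denotes the m-th harmonic number. -/
/-- The `m`-th harmonic number `H_m = ∑_{j=1}^m 1/j` as a complex number. -/
noncomputable def Hc (m : ℕ) : ℂ := ∑ j ∈ Finset.range m, 1 / ((j : ℂ) + 1)

open Finset Polynomial



/-- Vandermonde-type polynomial identity in any commutative ring -/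
lemma KL {R : Type*} [CommRing R] (n : ℕ) : ∀ (m : ℕ) (x : R),
    ∑ d ∈ Finset.range (m+1), ((n.choose d * m.descFactorial d : ℕ) : R) *
        ∏ i ∈ Finset.Ico d m, (x + (i:R) + 1)
    = ∏ i ∈ Finset.range m, (x + (n:R) + (i:R) + 1) := by
  induction n with
  | zero =>
      intro m x
      rw [Finset.sum_eq_single 0]
      · simp [Nat.Ico_zero_eq_range]
      · intro d _ hd
        rcases Nat.exists_eq_succ_of_ne_zero hd with ⟨e, rfl⟩
        simp
      · intro h; exact absurd (Finset.mem_range.2 (Nat.succ_pos m)) h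
  | succ n ih =>
      intro m x
      rcases m with _ | m'
      · simp
      · have shift : ∀ d, ∏ i ∈ Finset.Ico (d+1) (m'+1), (x + (i:R) + 1)
            = ∏ i ∈ Finset.Ico d m', ((x+1) + (i:R) + 1) := by
          intro d
          have h2 := Finset.prod_Ico_add' (fun i : ℕ => x + (i:R) + 1) d m' 1
          rw [← h2]
          exact Finset.prod_congr rfl fun i _ => by push_cast; ring
        have hsecond : ∑ d ∈ Finset.range (m'+1),
            ((n.choose d * (m'+1).descFactorial (d+1) : ℕ) : R) *
              ∏ i ∈ Finset.Ico (d+1) (m'+1), (x + (i:R) + 1)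
            = ((m'+1 : ℕ) : R) * ∏ i ∈ Finset.range m', ((x+1) + (n:R) + (i:R) + 1) := by
          rw [← ih m' (x+1), Finset.mul_sum]
          refine Finset.sum_congr rfl fun d _ => ?_
          rw [shift d, Nat.succ_descFactorial_succ]
          push_cast
          ring
        have hfirst : (∑ d ∈ Finset.range (m'+1),
              ((n.choose (d+1) * (m'+1).descFactorial (d+1) : ℕ) : R) *
                ∏ i ∈ Finset.Ico (d+1) (m'+1), (x + (i:R) + 1))
              + (((n+1).choose 0 * (m'+1).descFactorial 0 : ℕ) : R) *
                  ∏ i ∈ Finset.Ico 0 (m'+1), (x + (i:R) + 1)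
            = ∏ i ∈ Finset.range (m'+1), (x + (n:R) + (i:R) + 1) := by
          have h := ih (m'+1) x
          rw [Finset.sum_range_succ'
            (fun d => ((n.choose d * (m'+1).descFactorial d : ℕ) : R) *
                ∏ i ∈ Finset.Ico d (m'+1), (x + (i:R) + 1)) (m'+1)] at h
          simpa using h
        have hprod : ∏ i ∈ Finset.range (m'+1), (x + (n:R) + (i:R) + 1)
              + ((m'+1 : ℕ) : R) * ∏ i ∈ Finset.range m', ((x+1) + (n:R) + (i:R) + 1)
            = ∏ i ∈ Finset.range (m'+1), (x + ((n+1 : ℕ):R) + (i:R) + 1) := by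
          have e1 : ∏ i ∈ Finset.range (m'+1), (x + (n:R) + (i:R) + 1)
              = (x + (n:R) + 1) * ∏ i ∈ Finset.range m', ((x+1) + (n:R) + (i:R) + 1) := by
            rw [Finset.prod_range_succ' (fun i => x + (n:R) + (i:R) + 1) m']
            rw [mul_comm]
            congr 1
            · simp
            · exact Finset.prod_congr rfl fun i _ => by push_cast; ring
          have e2 : ∏ i ∈ Finset.range (m'+1), (x + ((n+1 : ℕ):R) + (i:R) + 1)
              = (x + (n:R) + (m':R) + 2) * ∏ i ∈ Finset.range m', ((x+1) + (n:R) + (i:R) + 1) := by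
            rw [Finset.prod_range_succ]
            rw [mul_comm]
            congr 1
            · push_cast; ring
            · exact Finset.prod_congr rfl fun i _ => by push_cast; ring
          rw [e1, e2]
          push_cast
          ring
        calc ∑ d ∈ Finset.range (m'+1+1), (((n+1).choose d * (m'+1).descFactorial d : ℕ) : R) *
                ∏ i ∈ Finset.Ico d (m'+1), (x + (i:R) + 1)
            = (∑ d ∈ Finset.range (m'+1), (((n+1).choose (d+1) * (m'+1).descFactorial (d+1) : ℕ) : R) *
                ∏ i ∈ Finset.Ico (d+1) (m'+1), (x + (i:R) + 1))
              + (((n+1).choose 0 * (m'+1).descFactorial 0 : ℕ) : R) *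
                  ∏ i ∈ Finset.Ico 0 (m'+1), (x + (i:R) + 1) := by
              exact Finset.sum_range_succ'
                (fun d => (((n+1).choose d * (m'+1).descFactorial d : ℕ) : R) *
                  ∏ i ∈ Finset.Ico d (m'+1), (x + (i:R) + 1)) (m'+1)
          _ = ((∑ d ∈ Finset.range (m'+1), ((n.choose (d+1) * (m'+1).descFactorial (d+1) : ℕ) : R) *
                ∏ i ∈ Finset.Ico (d+1) (m'+1), (x + (i:R) + 1))
              + (((n+1).choose 0 * (m'+1).descFactorial 0 : ℕ) : R) *
                  ∏ i ∈ Finset.Ico 0 (m'+1), (x + (i:R) + 1))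
              + ∑ d ∈ Finset.range (m'+1), ((n.choose d * (m'+1).descFactorial (d+1) : ℕ) : R) *
                ∏ i ∈ Finset.Ico (d+1) (m'+1), (x + (i:R) + 1) := by
              have hsplit : ∑ d ∈ Finset.range (m'+1),
                  (((n+1).choose (d+1) * (m'+1).descFactorial (d+1) : ℕ) : R) *
                    ∏ i ∈ Finset.Ico (d+1) (m'+1), (x + (i:R) + 1)
                  = (∑ d ∈ Finset.range (m'+1), ((n.choose (d+1) * (m'+1).descFactorial (d+1) : ℕ) : R) *
                      ∏ i ∈ Finset.Ico (d+1) (m'+1), (x + (i:R) + 1))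
                    + ∑ d ∈ Finset.range (m'+1), ((n.choose d * (m'+1).descFactorial (d+1) : ℕ) : R) *
                      ∏ i ∈ Finset.Ico (d+1) (m'+1), (x + (i:R) + 1) := by
                rw [← Finset.sum_add_distrib]
                refine Finset.sum_congr rfl fun d _ => ?_
                rw [Nat.choose_succ_succ n d]
                push_cast
                ring
              linear_combination hsplit
          _ = ∏ i ∈ Finset.range (m'+1), (x + ((n+1:ℕ):R) + (i:R) + 1) := by
              rw [hfirst, hsecond, hprod]



lemma prodIco (d m : ℕ) (h : d ≤ m) :
    ∏ i ∈ Finset.Ico d m, ((i:ℂ)+1) = (m.factorial : ℂ) / (d.factorial : ℂ) := by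
  induction m, h using Nat.le_induction with
  | base => rw [Finset.Ico_self, Finset.prod_empty,
      div_self (by exact_mod_cast d.factorial_ne_zero)]
  | succ m hdm ih =>
      rw [Finset.prod_Ico_succ_top hdm, ih, Nat.factorial_succ]
      have : (d.factorial : ℂ) ≠ 0 := by exact_mod_cast d.factorial_ne_zero
      field_simp
      push_cast
      ring

lemma sumIco (d m : ℕ) (h : d ≤ m) :
    ∑ i ∈ Finset.Ico d m, 1/((i:ℂ)+1) = Hc m - Hc d := by
  rw [Hc, Hc, Finset.sum_Ico_eq_sub _ h]

lemma eval0_prod (s : Finset ℕ) :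
    Polynomial.eval (0:ℂ) (∏ i ∈ s, (X + (i:ℂ[X]) + 1)) = ∏ i ∈ s, ((i:ℂ)+1) := by
  simp [Polynomial.eval_prod]

lemma deriv_eval (s : Finset ℕ) :
    Polynomial.eval (0:ℂ) (Polynomial.derivative (∏ i ∈ s, (X + (i:ℂ[X]) + 1)))
    = (∏ i ∈ s, ((i:ℂ)+1)) * ∑ i ∈ s, 1/((i:ℂ)+1) := by
  classical
  induction s using Finset.induction_on with
  | empty => simp
  | insert _ _ ha ih =>
      rename_i a s
      rw [Finset.prod_insert ha, Finset.prod_insert ha, Finset.sum_insert ha,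
        Polynomial.derivative_mul, Polynomial.eval_add, Polynomial.eval_mul,
        Polynomial.eval_mul, ih]
      have hd : Polynomial.derivative (X + (a:ℂ[X]) + 1) = 1 := by
        simp
      rw [hd]
      have he : Polynomial.eval (0:ℂ) (X + (a:ℂ[X]) + 1) = (a:ℂ)+1 := by simp
      rw [he, eval0_prod, Polynomial.eval_one]
      have hne : ((a:ℂ)+1) ≠ 0 := Nat.cast_add_one_ne_zero a
      field_simp

lemma hRprod (n m : ℕ) : ∏ i ∈ Finset.range m, (X + (n:ℂ[X]) + (i:ℂ[X]) + 1)
    = ∏ i ∈ Finset.Ico n (n+m), (X + (i:ℂ[X]) + 1) := by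
  rw [Finset.prod_Ico_eq_prod_range]
  have h : n + m - n = m := by omega
  rw [h]
  exact Finset.prod_congr rfl fun i _ => by push_cast; ring

lemma partB (n m : ℕ) :
    ∑ d ∈ Finset.range (m+1), ((n.choose d * m.descFactorial d : ℕ) : ℂ) *
        (((m.factorial : ℂ)/(d.factorial : ℂ)) * (Hc m - Hc d))
    = (((n+m).factorial : ℂ) / (n.factorial : ℂ)) * (Hc (n+m) - Hc n) := by
  have h := KL (R := ℂ[X]) n m X
  rw [hRprod n m] at h
  have h2 := congrArg (fun p => Polynomial.eval (0:ℂ) (Polynomial.derivative p)) h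
  simp only [map_sum, Polynomial.derivative_mul, Polynomial.derivative_natCast, zero_mul,
    zero_add, Polynomial.eval_finset_sum, Polynomial.eval_add, Polynomial.eval_mul,
    Polynomial.eval_natCast] at h2
  calc ∑ d ∈ Finset.range (m+1), ((n.choose d * m.descFactorial d : ℕ) : ℂ) *
        (((m.factorial : ℂ)/(d.factorial : ℂ)) * (Hc m - Hc d))
      = ∑ d ∈ Finset.range (m+1), ((n.choose d * m.descFactorial d : ℕ) : ℂ) *
        Polynomial.eval (0:ℂ) (Polynomial.derivative (∏ i ∈ Finset.Ico d m, (X + (i:ℂ[X]) + 1))) := by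
        refine Finset.sum_congr rfl fun d hd => ?_
        have hdm : d ≤ m := Nat.lt_succ_iff.1 (Finset.mem_range.1 hd)
        rw [deriv_eval, prodIco d m hdm, sumIco d m hdm]
    _ = Polynomial.eval (0:ℂ) (Polynomial.derivative (∏ i ∈ Finset.Ico n (n+m), (X + (i:ℂ[X]) + 1))) := h2
    _ = (((n+m).factorial : ℂ) / (n.factorial : ℂ)) * (Hc (n+m) - Hc n) := by
        rw [deriv_eval, prodIco n (n+m) (Nat.le_add_right n m), sumIco n (n+m) (Nat.le_add_right n m)]

lemma vandermonde (n m : ℕ) :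
    ∑ d ∈ Finset.range (m+1), (n.choose d : ℂ) * (m.choose d : ℂ)
    = ((n+m).choose m : ℂ) := by
  have h := KL (R := ℂ) n m 0
  have hfac : (m.factorial : ℂ) ≠ 0 := by exact_mod_cast m.factorial_ne_zero
  have hnfac : (n.factorial : ℂ) ≠ 0 := by exact_mod_cast n.factorial_ne_zero
  have hL : ∑ d ∈ Finset.range (m+1), ((n.choose d * m.descFactorial d : ℕ) : ℂ) *
      ∏ i ∈ Finset.Ico d m, ((0:ℂ) + (i:ℂ) + 1)
      = ∑ d ∈ Finset.range (m+1), (n.choose d : ℂ) * (m.choose d : ℂ) * (m.factorial : ℂ) := by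
    refine Finset.sum_congr rfl fun d hd => ?_
    have hdm : d ≤ m := Nat.lt_succ_iff.1 (Finset.mem_range.1 hd)
    have hp : ∏ i ∈ Finset.Ico d m, ((0:ℂ) + (i:ℂ) + 1) = ∏ i ∈ Finset.Ico d m, ((i:ℂ)+1) :=
      Finset.prod_congr rfl fun i _ => by ring
    rw [hp, prodIco d m hdm, Nat.descFactorial_eq_factorial_mul_choose]
    have hdfac : (d.factorial : ℂ) ≠ 0 := by exact_mod_cast d.factorial_ne_zero
    push_cast
    field_simp
  have hR : ∏ i ∈ Finset.range m, ((0:ℂ) + (n:ℂ) + (i:ℂ) + 1)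
      = ((n+m).factorial : ℂ) / (n.factorial : ℂ) := by
    have : ∏ i ∈ Finset.range m, ((0:ℂ) + (n:ℂ) + (i:ℂ) + 1)
        = ∏ i ∈ Finset.Ico n (n+m), ((i:ℂ)+1) := by
      rw [Finset.prod_Ico_eq_prod_range]
      have h2 : n + m - n = m := by omega
      rw [h2]
      exact Finset.prod_congr rfl fun i _ => by push_cast; ring
    rw [this, prodIco n (n+m) (Nat.le_add_right n m)]
  rw [hL, hR] at h
  have hc : ((n+m).choose m : ℂ) = ((n+m).factorial : ℂ) / ((m.factorial : ℂ) * (n.factorial : ℂ)) := by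
    rw [Nat.cast_choose ℂ (Nat.le_add_left m n), Nat.add_sub_cancel]
  rw [hc]
  rw [← Finset.sum_mul] at h
  have hne : ((n+m).factorial : ℂ) ≠ 0 := by exact_mod_cast (n+m).factorial_ne_zero
  field_simp at h ⊢
  linear_combination h

lemma partA (n m : ℕ) :
    ∑ d ∈ Finset.range (m+1), (n.choose d : ℂ) * (m.choose d : ℂ) * Hc d
    = ((n+m).choose m : ℂ) * (Hc n + Hc m - Hc (n+m)) := by
  have hfac : (m.factorial : ℂ) ≠ 0 := by exact_mod_cast m.factorial_ne_zero
  have hnfac : (n.factorial : ℂ) ≠ 0 := by exact_mod_cast n.factorial_ne_zero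
  have hB := partB n m
  have hB' : ∑ d ∈ Finset.range (m+1),
      (n.choose d : ℂ) * (m.choose d : ℂ) * (m.factorial : ℂ) * (Hc m - Hc d)
      = (((n+m).factorial : ℂ) / (n.factorial : ℂ)) * (Hc (n+m) - Hc n) := by
    rw [← hB]
    refine Finset.sum_congr rfl fun d hd => ?_
    rw [Nat.descFactorial_eq_factorial_mul_choose]
    have hdfac : (d.factorial : ℂ) ≠ 0 := by exact_mod_cast d.factorial_ne_zero
    push_cast
    field_simp
  have hV := vandermonde n m
  have hc : ((n+m).choose m : ℂ) = ((n+m).factorial : ℂ) / ((m.factorial : ℂ) * (n.factorial : ℂ)) := by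
    rw [Nat.cast_choose ℂ (Nat.le_add_left m n), Nat.add_sub_cancel]
  have hsplit : ∑ d ∈ Finset.range (m+1), (n.choose d : ℂ) * (m.choose d : ℂ) * Hc d
      = Hc m * (∑ d ∈ Finset.range (m+1), (n.choose d : ℂ) * (m.choose d : ℂ))
        - ((m.factorial : ℂ))⁻¹ * ∑ d ∈ Finset.range (m+1),
            (n.choose d : ℂ) * (m.choose d : ℂ) * (m.factorial : ℂ) * (Hc m - Hc d) := by
    rw [Finset.mul_sum, Finset.mul_sum, ← Finset.sum_sub_distrib]
    refine Finset.sum_congr rfl fun d _ => ?_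
    field_simp
    ring
  rw [hsplit, hV, hB', hc]
  field_simp
  ring

lemma coeffRHS (k n : ℕ) (h : n ≤ k) :
    (k.choose n : ℂ)^2 * (Hc n - Hc k + Hc (k-n))
    = (k.choose n : ℂ) * ∑ d ∈ Finset.range (k-n+1),
        (n.choose d : ℂ) * ((k-n).choose d : ℂ) * Hc d := by
  have hA := partA n (k-n)
  have he : n + (k - n) = k := by omega
  rw [he] at hA
  rw [hA, Nat.choose_symm h]
  ring

lemma keycast (k a b : ℕ) (ha : 2*a ≤ k) (hb : b ≤ k - 2*a) :
    (k.factorial : ℂ) / ((a.factorial : ℂ)^2 * ((k - 2*a).factorial : ℂ))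
      * ((k - 2*a).choose b : ℂ)
    = (k.choose (a+b) : ℂ) * ((a+b).choose a : ℂ) * ((k-(a+b)).choose a : ℂ) := by
  have hab : a + b ≤ k := by omega
  have hak : a ≤ k - (a+b) := by omega
  rw [Nat.cast_choose ℂ hb, Nat.cast_choose ℂ hab, Nat.cast_choose ℂ hak,
    Nat.cast_choose ℂ (Nat.le_add_right a b), Nat.add_sub_cancel_left]
  have h1 : k - 2*a - b = k - (a+b) - a := by omega
  rw [h1]
  have f1 : (k.factorial : ℂ) ≠ 0 := by exact_mod_cast k.factorial_ne_zero
  have f2 : (a.factorial : ℂ) ≠ 0 := by exact_mod_cast a.factorial_ne_zero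
  have f3 : (b.factorial : ℂ) ≠ 0 := by exact_mod_cast b.factorial_ne_zero
  have f4 : ((k-2*a).factorial : ℂ) ≠ 0 := by exact_mod_cast (k-2*a).factorial_ne_zero
  have f5 : ((a+b).factorial : ℂ) ≠ 0 := by exact_mod_cast (a+b).factorial_ne_zero
  have f6 : ((k-(a+b)).factorial : ℂ) ≠ 0 := by exact_mod_cast (k-(a+b)).factorial_ne_zero
  have f7 : ((k-(a+b)-a).factorial : ℂ) ≠ 0 := by exact_mod_cast (k-(a+b)-a).factorial_ne_zero
  field_simp


/-- For every natural number `k` and every complex number `y`,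
`∑_{d=0}^{⌊k/2⌋} k!/((d!)^2 (k-2d)!) H_d y^d (1+y)^{k-2d}
 = ∑_{d=0}^{k} (k choose d)^2 (H_d - H_k + H_{k-d}) y^d`. -/
theorem stmt1 (k : ℕ) (y : ℂ) :
    ∑ d ∈ Finset.range (k / 2 + 1),
      (k.factorial : ℂ) / ((d.factorial : ℂ) ^ 2 * ((k - 2 * d).factorial : ℂ))
        * Hc d * y ^ d * (1 + y) ^ (k - 2 * d)
    = ∑ d ∈ Finset.range (k + 1),
        ((k.choose d : ℂ)) ^ 2 * (Hc d - Hc k + Hc (k - d)) * y ^ d := by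
  have hLHS : ∀ d ∈ Finset.range (k/2+1),
      (k.factorial : ℂ) / ((d.factorial : ℂ) ^ 2 * ((k - 2 * d).factorial : ℂ))
        * Hc d * y ^ d * (1 + y) ^ (k - 2 * d)
      = ∑ j ∈ Finset.range (k - 2*d + 1),
          (k.factorial : ℂ) / ((d.factorial : ℂ) ^ 2 * ((k - 2 * d).factorial : ℂ))
            * Hc d * ((k - 2*d).choose j : ℂ) * y ^ (d + j) := by
    intro d _
    rw [add_comm (1:ℂ) y, add_pow, Finset.mul_sum]
    refine Finset.sum_congr rfl fun j _ => ?_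
    rw [one_pow, pow_add]
    ring
  have hRHS : ∀ n ∈ Finset.range (k+1),
      ((k.choose n : ℂ)) ^ 2 * (Hc n - Hc k + Hc (k - n)) * y ^ n
      = ∑ d ∈ Finset.range (k - n + 1),
          (k.choose n : ℂ) * (n.choose d : ℂ) * ((k-n).choose d : ℂ) * Hc d * y ^ n := by
    intro n hn
    rw [coeffRHS k n (Nat.lt_succ_iff.1 (Finset.mem_range.1 hn)), Finset.mul_sum,
      Finset.sum_mul]
    exact Finset.sum_congr rfl fun d _ => by ring
  rw [Finset.sum_congr rfl hLHS, Finset.sum_congr rfl hRHS,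
    Finset.sum_sigma' (Finset.range (k/2+1)) (fun d => Finset.range (k - 2*d + 1))
      (fun d j => (k.factorial : ℂ) / ((d.factorial : ℂ) ^ 2 * ((k - 2 * d).factorial : ℂ))
            * Hc d * ((k - 2*d).choose j : ℂ) * y ^ (d + j)),
    Finset.sum_sigma' (Finset.range (k+1)) (fun n => Finset.range (k - n + 1))
      (fun n d => (k.choose n : ℂ) * (n.choose d : ℂ) * ((k-n).choose d : ℂ) * Hc d * y ^ n)]
  rw [← Finset.sum_filter_of_ne (s := (Finset.range (k+1)).sigma (fun n => Finset.range (k - n + 1)))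
      (p := fun p => p.2 ≤ p.1)
      (f := fun p => (k.choose p.1 : ℂ) * (p.1.choose p.2 : ℂ) * ((k-p.1).choose p.2 : ℂ) * Hc p.2 * y ^ p.1)
      (by
        intro p _ hne
        by_contra hle
        push_neg at hle
        apply hne
        rw [Nat.choose_eq_zero_of_lt hle]
        push_cast
        ring)]
  refine Finset.sum_nbij' (fun p => (⟨p.1 + p.2, p.1⟩ : Σ _ : ℕ, ℕ))
    (fun p => (⟨p.2, p.1 - p.2⟩ : Σ _ : ℕ, ℕ)) ?_ ?_ ?_ ?_ ?_
  · intro p hp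
    rcases p with ⟨a, b⟩
    simp only [Finset.mem_sigma, Finset.mem_range, Finset.mem_filter] at hp ⊢
    omega
  · intro p hp
    rcases p with ⟨n, d⟩
    simp only [Finset.mem_sigma, Finset.mem_range, Finset.mem_filter] at hp ⊢
    omega
  · intro p hp
    rcases p with ⟨a, b⟩
    simp only [Nat.add_sub_cancel_left]
  · intro p hp
    rcases p with ⟨n, d⟩
    simp only [Finset.mem_filter, Finset.mem_sigma, Finset.mem_range] at hp
    simp only []
    congr 1
    omega
  · intro p hp
    rcases p with ⟨a, b⟩
    simp only [Finset.mem_sigma, Finset.mem_range] at hp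
    obtain ⟨ha, hb⟩ := hp
    have ha' : 2*a ≤ k := by omega
    have hb' : b ≤ k - 2*a := by omega
    have := keycast k a b ha' hb'
    simp only []
    calc (k.factorial : ℂ) / ((a.factorial : ℂ) ^ 2 * ((k - 2 * a).factorial : ℂ))
            * Hc a * ((k - 2*a).choose b : ℂ) * y ^ (a + b)
        = ((k.factorial : ℂ) / ((a.factorial : ℂ)^2 * ((k - 2*a).factorial : ℂ))
            * ((k - 2*a).choose b : ℂ)) * Hc a * y ^ (a+b) := by ring
      _ = ((k.choose (a+b) : ℂ) * ((a+b).choose a : ℂ) * ((k-(a+b)).choose a : ℂ))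
            * Hc a * y ^ (a+b) := by rw [this]
      _ = (k.choose (a+b) : ℂ) * ((a+b).choose a : ℂ) * ((k-(a+b)).choose a : ℂ)
            * Hc a * y ^ (a+b) := by ring
end

section
/- For every integer k \ge 0 and all complex numbers u^1, u^2, q, one has \sum_{d=0}^{\lfloor k/2 \rfloor} \frac{(2u^1+u^2-2H_d)\,(q e^{2u^1+u^2})^d\,(e^{u^1}(1+q e^{u^2}))^{k-2d}}{(d!)^2 (k-2d)!} = \frac{e^{k u^1}}{k!} \sum_{d=0}^{k} \binom{k}{d}^2 \big(2u^1+u^2 - 2H_d + 2(H_k - H_{k-d})\big)\,(q e^{u^2})^d, where H_m is the m-th harmonic number. -/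
open Finset Polynomial


lemma Hc_succ (m : ℕ) : Hc (m+1) = Hc m + 1/((m:ℂ)+1) := Finset.sum_range_succ _ m

lemma castDesc (M w : ℕ) : ∏ i ∈ range w, ((M:ℂ) - i) = (M.descFactorial w : ℂ) := by
  induction w with
  | zero => simp
  | succ w ih =>
    rw [prod_range_succ, ih, Nat.descFactorial_succ]
    rcases le_or_gt w M with h | h
    · push_cast [Nat.cast_sub h]; ring
    · rw [Nat.descFactorial_eq_zero_iff_lt.mpr h]
      simp [Nat.descFactorial_eq_zero_iff_lt.mpr (h.trans (Nat.lt_succ_self w))]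

lemma vandAux (m N n : ℕ) :
    (N + m).choose n = ∑ d ∈ range (n+1), m.choose d * N.choose (n - d) := by
  rw [add_comm N m, Nat.add_choose_eq]
  rw [Finset.Nat.sum_antidiagonal_eq_sum_range_succ_mk]

lemma vand (m n : ℕ) :
    ∑ d ∈ range (n+1), m.choose d * n.choose d = (m+n).choose n := by
  rw [add_comm m n, vandAux m n n]
  refine Finset.sum_congr rfl fun d hd => ?_
  have := Finset.mem_range.mp hd
  rw [Nat.choose_symm (by omega : d ≤ n)]

lemma choose_cast_eq {d n : ℕ} (h : d ≤ n) :
    (n.choose d : ℂ) = (n.factorial : ℂ) / ((d.factorial : ℂ) * ((n-d).factorial : ℂ)) := by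
  have := Nat.choose_mul_factorial_mul_factorial h
  have h1 : (n.choose d : ℂ) * d.factorial * (n-d).factorial = n.factorial := by
    exact_mod_cast congrArg (Nat.cast : ℕ → ℂ) this
  have hd0 : (d.factorial : ℂ) ≠ 0 := Nat.cast_ne_zero.mpr d.factorial_ne_zero
  have hnd0 : ((n-d).factorial : ℂ) ≠ 0 := Nat.cast_ne_zero.mpr (n-d).factorial_ne_zero
  field_simp
  linear_combination h1

lemma evalNat (m n N : ℕ) :
    (N + m).descFactorial n
      = ∑ d ∈ range (n+1), m.choose d * n.choose d * d.factorial * N.descFactorial (n-d) := by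
  rw [Nat.descFactorial_eq_factorial_mul_choose, vandAux m N n, Finset.mul_sum]
  refine sum_congr rfl fun d hd => ?_
  have hd' : d ≤ n := by have := mem_range.mp hd; omega
  rw [Nat.descFactorial_eq_factorial_mul_choose]
  rw [← Nat.choose_mul_factorial_mul_factorial hd']
  ring

lemma PQ (m n : ℕ) :
    (∏ i ∈ range n, (X - C ((i:ℂ) - m))) =
    ∑ d ∈ range (n+1), C ((m.choose d : ℂ) * (n.choose d) * d.factorial) *
      ∏ i ∈ range (n - d), (X - C (i:ℂ)) := by
  apply eq_of_infinite_eval_eq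
  refine Set.infinite_of_injective_forall_mem Nat.cast_injective fun N => ?_
  simp only [Set.mem_setOf_eq, eval_prod, eval_finset_sum, eval_mul, eval_sub, eval_X, eval_C]
  have hL : ∏ i ∈ range n, ((N:ℂ) - ((i:ℂ) - m)) = ((N + m).descFactorial n : ℂ) := by
    rw [← castDesc]
    refine prod_congr rfl fun i _ => by push_cast; ring
  rw [hL, evalNat m n N]
  push_cast [castDesc]
  rfl


lemma evalDeriv (a : ℕ → ℂ) (p : ℂ) :
    ∀ w : ℕ, (∀ i, i < w → p - a i ≠ 0) →
    eval p (derivative (∏ i ∈ range w, (X - C (a i))))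
      = (∏ i ∈ range w, (p - a i)) * ∑ i ∈ range w, (p - a i)⁻¹ := by
  intro w
  induction w with
  | zero => simp
  | succ w ih =>
    intro h
    rw [prod_range_succ, derivative_mul, eval_add, eval_mul, eval_mul,
      ih (fun i hi => h i (by omega)), derivative_sub, derivative_X, derivative_C,
      sub_zero, eval_one, eval_sub, eval_X, eval_C, prod_range_succ, sum_range_succ]
    have hw : p - a w ≠ 0 := h w (by omega)
    rw [eval_prod]
    simp only [eval_sub, eval_X, eval_C, one_div]
    field_simp

lemma recipSum : ∀ n m : ℕ, ∑ i ∈ range n, (((n:ℂ) + m) - i)⁻¹ = Hc (n+m) - Hc m := by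
  intro n
  induction n with
  | zero => simp [Hc]
  | succ n ih =>
    intro m
    rw [sum_range_succ]
    have h1 : ∑ i ∈ range n, (((n:ℂ)+1+m) - i)⁻¹ = Hc (n+(m+1)) - Hc (m+1) := by
      rw [← ih (m+1)]
      refine sum_congr rfl fun i _ => by push_cast; ring_nf
    push_cast
    rw [h1]
    have : n + (m+1) = n + 1 + m := by omega
    rw [this, Hc_succ m]
    have : ((n:ℂ)+1+m) - n = (m:ℂ) + 1 := by ring
    rw [this]
    ring

lemma harmDerivId (m n : ℕ) :
    ((n+m).descFactorial n : ℂ) * (Hc (n+m) - Hc m)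
      = ∑ d ∈ range (n+1), (m.choose d : ℂ) * (n.choose d) * d.factorial *
          (((n.descFactorial (n-d)) : ℂ) * (Hc n - Hc d)) := by
  have h := congrArg (fun P => eval (n:ℂ) (derivative P)) (PQ m n)
  simp only [derivative_sum, eval_finset_sum] at h
  have hL : eval (n:ℂ) (derivative (∏ i ∈ range n, (X - C ((i:ℂ) - m))))
      = ((n+m).descFactorial n : ℂ) * (Hc (n+m) - Hc m) := by
    rw [evalDeriv (fun i => (i:ℂ) - m) (n:ℂ) n (fun i hi => ?_)]
    · congr 1
      · rw [← castDesc (n+m) n]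
        exact prod_congr rfl fun i _ => by push_cast; ring
      · rw [← recipSum n m]
        exact sum_congr rfl fun i _ => by ring_nf
    · have e : (n:ℂ) - ((i:ℂ) - m) = ((n + m - i : ℕ):ℂ) := by
        push_cast [Nat.cast_sub (by omega : i ≤ n + m)]; ring
      rw [e]
      exact Nat.cast_ne_zero.mpr (by omega)
  rw [hL] at h
  rw [h]
  refine sum_congr rfl fun d hd => ?_
  have hd' : d ≤ n := by have := mem_range.mp hd; omega
  rw [derivative_C_mul, eval_mul, eval_C]
  rw [evalDeriv (fun i => (i:ℂ)) (n:ℂ) (n-d) (fun i hi => ?_)]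
  · have e1 : ∏ i ∈ range (n-d), ((n:ℂ) - (i:ℂ)) = ((n.descFactorial (n-d)) : ℂ) :=
      castDesc n (n-d)
    have e2 : ∑ i ∈ range (n-d), ((n:ℂ) - (i:ℂ))⁻¹ = Hc n - Hc d := by
      have h2 := recipSum (n-d) d
      rw [Nat.sub_add_cancel hd'] at h2
      rw [← h2]
      refine sum_congr rfl fun i _ => ?_
      congr 1
      push_cast [Nat.cast_sub hd']; ring
    rw [e1, e2]
  · have e : (n:ℂ) - (i:ℂ) = ((n - i : ℕ):ℂ) := by
      push_cast [Nat.cast_sub (by omega : i ≤ n)]; ring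
    rw [e]
    exact Nat.cast_ne_zero.mpr (by omega)

lemma hsum (m n : ℕ) :
    ∑ d ∈ range (n+1), (m.choose d : ℂ) * (n.choose d) * (Hc n - Hc d)
      = ((m+n).choose n : ℂ) * (Hc (n+m) - Hc m) := by
  have h := harmDerivId m n
  have hfac : ((n.factorial : ℕ) : ℂ) ≠ 0 := Nat.cast_ne_zero.mpr n.factorial_ne_zero
  have hL : ((n+m).descFactorial n : ℂ) = (n.factorial : ℂ) * ((m+n).choose n : ℂ) := by
    rw [Nat.descFactorial_eq_factorial_mul_choose]
    push_cast [add_comm n m]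
    ring
  rw [hL] at h
  have hR : ∀ d ∈ range (n+1),
      (m.choose d : ℂ) * (n.choose d) * d.factorial *
          (((n.descFactorial (n-d)) : ℂ) * (Hc n - Hc d))
        = (n.factorial : ℂ) * ((m.choose d : ℂ) * (n.choose d) * (Hc n - Hc d)) := by
    intro d hd
    have hd' : d ≤ n := by have := mem_range.mp hd; omega
    rw [Nat.descFactorial_eq_factorial_mul_choose, Nat.choose_symm hd']
    have : (n.choose d : ℂ) * d.factorial * (n-d).factorial = n.factorial := by
      exact_mod_cast congrArg (Nat.cast : ℕ → ℂ)
        (Nat.choose_mul_factorial_mul_factorial hd')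
    push_cast
    linear_combination (m.choose d : ℂ) * (Hc n - Hc d) * (n.choose d) * this
  rw [Finset.sum_congr rfl hR, ← Finset.mul_sum, mul_assoc] at h
  exact (mul_left_cancel₀ hfac h).symm

lemma coeff_id (m n : ℕ) (A : ℂ) :
    ∑ d ∈ range (n+1), (m.choose d : ℂ) * (n.choose d) * (A - 2 * Hc d)
      = ((m+n).choose n : ℂ) * (A - 2 * Hc n + 2 * (Hc (m+n) - Hc m)) := by
  have hv : ∑ d ∈ range (n+1), (m.choose d : ℂ) * (n.choose d) = ((m+n).choose n : ℂ) := by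
    exact_mod_cast congrArg (Nat.cast : ℕ → ℂ) (vand m n)
  have hh := hsum m n
  have split : ∀ d ∈ range (n+1),
      (m.choose d : ℂ) * (n.choose d) * (A - 2 * Hc d)
        = (A - 2 * Hc n) * ((m.choose d : ℂ) * (n.choose d))
          + 2 * ((m.choose d : ℂ) * (n.choose d) * (Hc n - Hc d)) := by
    intro d _; ring
  rw [Finset.sum_congr rfl split, Finset.sum_add_distrib, ← Finset.mul_sum, ← Finset.mul_sum,
    hv, hh]
  have : Hc (n+m) = Hc (m+n) := by rw [add_comm]
  rw [this]
  ring

lemma coeffNat (k d j : ℕ) (h2d : 2*d ≤ k) (hj : j ≤ k - 2*d) :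
    k.choose (d+j) * (d+j).choose d * (k-(d+j)).choose d
        * (d.factorial * d.factorial * (k-2*d).factorial)
      = (k-2*d).choose j * k.factorial := by
  have hm : d + j ≤ k := by omega
  have h1 := Nat.choose_mul_factorial_mul_factorial hm
  have h2 := Nat.choose_mul_factorial_mul_factorial (by omega : d ≤ d + j)
  have h3 := Nat.choose_mul_factorial_mul_factorial (by omega : d ≤ k - (d+j))
  have h4 := Nat.choose_mul_factorial_mul_factorial (by omega : j ≤ k - 2*d)
  have e2 : d + j - d = j := by omega
  have e3 : k - (d+j) - d = k - 2*d - j := by omega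
  rw [e2] at h2
  rw [e3] at h3
  apply Nat.eq_of_mul_eq_mul_right
    (Nat.mul_pos (j.factorial_pos) ((k-2*d-j).factorial_pos))
  calc k.choose (d+j) * (d+j).choose d * (k-(d+j)).choose d
        * (d.factorial * d.factorial * (k-2*d).factorial)
        * (j.factorial * (k-2*d-j).factorial)
      = k.choose (d+j) * ((d+j).choose d * d.factorial * j.factorial)
          * ((k-(d+j)).choose d * d.factorial * (k-2*d-j).factorial)
          * (k-2*d).factorial := by ring
    _ = k.choose (d+j) * (d+j).factorial * (k-(d+j)).factorial * (k-2*d).factorial := by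
        rw [h2, h3]
    _ = k.factorial * (k-2*d).factorial := by rw [h1]
    _ = ((k-2*d).choose j * j.factorial * (k-2*d-j).factorial) * k.factorial := by
        rw [h4]; ring
    _ = (k-2*d).choose j * k.factorial * (j.factorial * (k-2*d-j).factorial) := by ring

lemma coeffNatC (k d j : ℕ) (h2d : 2*d ≤ k) (hj : j ≤ k - 2*d) :
    (k.choose (d+j) : ℂ) * ((d+j).choose d) * ((k-(d+j)).choose d) / (k.factorial : ℂ)
      = ((k-2*d).choose j : ℂ) / ((d.factorial : ℂ)^2 * ((k-2*d).factorial : ℂ)) := by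
  have f0 : ∀ a : ℕ, ((a.factorial : ℕ) : ℂ) ≠ 0 :=
    fun a => Nat.cast_ne_zero.mpr a.factorial_ne_zero
  rw [div_eq_div_iff (f0 k) (mul_ne_zero (pow_ne_zero 2 (f0 d)) (f0 (k-2*d)))]
  have := coeffNat k d j h2d hj
  have hc : ((k.choose (d+j) * (d+j).choose d * (k-(d+j)).choose d
        * (d.factorial * d.factorial * (k-2*d).factorial) : ℕ) : ℂ)
      = (((k-2*d).choose j * k.factorial : ℕ) : ℂ) := by exact congrArg (Nat.cast : ℕ → ℂ) this
  push_cast at hc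
  rw [sq]
  linear_combination hc

lemma central (k : ℕ) (A x : ℂ) :
    ∑ d ∈ range (k/2+1), (A - 2*Hc d) * x^d * (1+x)^(k-2*d)
        / ((d.factorial:ℂ)^2 * ((k-2*d).factorial:ℂ))
      = (1/(k.factorial:ℂ)) * ∑ m ∈ range (k+1),
          (k.choose m:ℂ)^2 * (A - 2*Hc m + 2*(Hc k - Hc (k-m))) * x^m := by
  set g : ℕ → ℕ → ℂ := fun d m =>
    (k.choose m:ℂ) * ((m.choose d):ℂ) * (((k-m).choose d):ℂ) * (A - 2*Hc d) * x^m
      / (k.factorial:ℂ) with hg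
  have hRow : ∀ d ∈ range (k/2+1), ∑ m ∈ range (k+1), g d m
      = (A - 2*Hc d) * x^d * (1+x)^(k-2*d)
        / ((d.factorial:ℂ)^2 * ((k-2*d).factorial:ℂ)) := by
    intro d hd
    have h2d : 2*d ≤ k := by
      have := mem_range.mp hd
      omega
    have hIco : ∑ m ∈ range (k+1), g d m = ∑ m ∈ Ico d (k-d+1), g d m := by
      refine (Finset.sum_subset (fun m hm => ?_) (fun m hm hm' => ?_)).symm
      · rw [mem_Ico] at hm; rw [mem_range]; omega
      · rw [mem_range] at hm
        rw [mem_Ico] at hm'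
        rcases (by omega : m < d ∨ k - m < d) with h | h
        · simp [hg, Nat.choose_eq_zero_of_lt h]
        · simp [hg, Nat.choose_eq_zero_of_lt h]
    rw [hIco, Finset.sum_Ico_eq_sum_range]
    have hlen : k - d + 1 - d = k - 2*d + 1 := by omega
    rw [hlen]
    rw [add_comm (1:ℂ) x, add_pow]
    rw [Finset.mul_sum, Finset.sum_div]
    refine sum_congr rfl fun j hj => ?_
    have hj' : j ≤ k - 2*d := by have := mem_range.mp hj; omega
    have hc := coeffNatC k d j h2d hj'
    calc g d (d+j)
        = ((k.choose (d+j) : ℂ) * ((d+j).choose d) * ((k-(d+j)).choose d) / (k.factorial : ℂ))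
            * ((A - 2*Hc d) * x^(d+j)) := by
          simp only [hg]
          ring
      _ = (((k-2*d).choose j : ℂ) / ((d.factorial : ℂ)^2 * ((k-2*d).factorial : ℂ)))
            * ((A - 2*Hc d) * x^(d+j)) := by rw [hc]
      _ = (A - 2*Hc d) * x^d * (x^j * 1^(k-2*d-j) * ((k-2*d).choose j : ℂ))
            / ((d.factorial:ℂ)^2 * ((k-2*d).factorial:ℂ)) := by
          rw [one_pow, pow_add]
          ring
  have hCol : ∀ m ∈ range (k+1), ∑ d ∈ range (k+1), g d m
      = (1/(k.factorial:ℂ))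
          * ((k.choose m:ℂ)^2 * (A - 2*Hc m + 2*(Hc k - Hc (k-m))) * x^m) := by
    intro m hm
    have hm' : m ≤ k := by have := mem_range.mp hm; omega
    have hres : ∑ d ∈ range (k+1), g d m = ∑ d ∈ range (m+1), g d m := by
      refine (Finset.sum_subset (fun d hd => ?_) (fun d hd hd' => ?_)).symm
      · rw [mem_range] at hd ⊢; omega
      · rw [mem_range] at hd hd'
        simp [hg, Nat.choose_eq_zero_of_lt (by omega : m < d)]
    rw [hres]
    have hcoeff := coeff_id (k-m) m A
    rw [Nat.sub_add_cancel hm'] at hcoeff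
    calc ∑ d ∈ range (m+1), g d m
        = ((k.choose m:ℂ) * x^m / (k.factorial:ℂ))
            * ∑ d ∈ range (m+1), ((k-m).choose d : ℂ) * (m.choose d) * (A - 2*Hc d) := by
          rw [Finset.mul_sum]
          refine sum_congr rfl fun d _ => ?_
          simp only [hg]
          ring
      _ = ((k.choose m:ℂ) * x^m / (k.factorial:ℂ))
            * ((k.choose m : ℂ) * (A - 2 * Hc m + 2 * (Hc k - Hc (k-m)))) := by
          rw [hcoeff]
      _ = (1/(k.factorial:ℂ))
            * ((k.choose m:ℂ)^2 * (A - 2*Hc m + 2*(Hc k - Hc (k-m))) * x^m) := by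
          ring
  calc ∑ d ∈ range (k/2+1), (A - 2*Hc d) * x^d * (1+x)^(k-2*d)
        / ((d.factorial:ℂ)^2 * ((k-2*d).factorial:ℂ))
      = ∑ d ∈ range (k/2+1), ∑ m ∈ range (k+1), g d m :=
        (Finset.sum_congr rfl hRow).symm
    _ = ∑ d ∈ range (k+1), ∑ m ∈ range (k+1), g d m := by
        refine Finset.sum_subset (fun d hd => ?_) (fun d hd hd' => ?_)
        · rw [mem_range] at hd ⊢
          omega
        · rw [mem_range] at hd hd'
          refine Finset.sum_eq_zero fun m hm => ?_
          rw [mem_range] at hm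
          rcases (by omega : m < d ∨ k - m < d) with h | h
          · simp [hg, Nat.choose_eq_zero_of_lt h]
          · simp [hg, Nat.choose_eq_zero_of_lt h]
    _ = ∑ m ∈ range (k+1), ∑ d ∈ range (k+1), g d m := Finset.sum_comm
    _ = ∑ m ∈ range (k+1), (1/(k.factorial:ℂ))
          * ((k.choose m:ℂ)^2 * (A - 2*Hc m + 2*(Hc k - Hc (k-m))) * x^m) :=
        Finset.sum_congr rfl hCol
    _ = (1/(k.factorial:ℂ)) * ∑ m ∈ range (k+1),
          (k.choose m:ℂ)^2 * (A - 2*Hc m + 2*(Hc k - Hc (k-m))) * x^m := by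
        rw [Finset.mul_sum]


/-- the fully evaluated form of equation (221) of Lemma 3.1. -/
theorem stmt4 (k : ℕ) (u1 u2 q : ℂ) :
    ∑ d ∈ Finset.range (k / 2 + 1),
      (2 * u1 + u2 - 2 * Hc d) * (q * Complex.exp (2 * u1 + u2)) ^ d
        * (Complex.exp u1 * (1 + q * Complex.exp u2)) ^ (k - 2 * d)
        / ((d.factorial : ℂ) ^ 2 * ((k - 2 * d).factorial : ℂ))
    = Complex.exp ((k : ℂ) * u1) / (k.factorial : ℂ)
        * ∑ d ∈ Finset.range (k + 1),
            ((k.choose d : ℂ)) ^ 2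
              * (2 * u1 + u2 - 2 * Hc d + 2 * (Hc k - Hc (k - d)))
              * (q * Complex.exp u2) ^ d := by
  have hterm : ∀ d ∈ Finset.range (k/2+1),
      (2 * u1 + u2 - 2 * Hc d) * (q * Complex.exp (2 * u1 + u2)) ^ d
        * (Complex.exp u1 * (1 + q * Complex.exp u2)) ^ (k - 2 * d)
        / ((d.factorial : ℂ) ^ 2 * ((k - 2 * d).factorial : ℂ))
      = Complex.exp ((k:ℂ)*u1) * ((2*u1+u2 - 2*Hc d) * (q*Complex.exp u2)^d
          * (1+q*Complex.exp u2)^(k-2*d)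
          / ((d.factorial : ℂ)^2 * ((k-2*d).factorial : ℂ))) := by
    intro d hd
    have h2d : 2*d ≤ k := by have := Finset.mem_range.mp hd; omega
    have hq : q * Complex.exp (2*u1+u2) = Complex.exp u1 ^ 2 * (q * Complex.exp u2) := by
      rw [two_mul, Complex.exp_add, Complex.exp_add]; ring
    have hk : Complex.exp u1 ^ (2*d) * Complex.exp u1 ^ (k - 2*d) = Complex.exp ((k:ℂ)*u1) := by
      rw [← pow_add, (by omega : 2*d + (k-2*d) = k), ← Complex.exp_nat_mul]
    have hsplit : (Complex.exp u1 * (1 + q*Complex.exp u2))^(k-2*d)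
        = Complex.exp u1 ^ (k-2*d) * (1 + q*Complex.exp u2)^(k-2*d) := mul_pow _ _ _
    rw [hq, hsplit, mul_pow, ← pow_mul, ← hk]
    ring
  rw [Finset.sum_congr rfl hterm, ← Finset.mul_sum,
    central k (2*u1+u2) (q*Complex.exp u2)]
  ring
end

section
/- For every integer k \ge 0 and all complex numbers u^1, u^2, q, one has \sum_{d=0}^{\lfloor (k+1)/2 \rfloor} \frac{\big(q e^{2u^1+u^2}(1-q e^{u^2})\big)^d \big(\sqrt{-1}\, e^{u^1}(1-2q e^{u^2})\big)^{k+1-2d}}{(d!)^2 (k+1-2d)!} = \frac{(\sqrt{-1})^{k+1} e^{(k+1)u^1}}{(k+1)!} \sum_{d=0}^{k+1} (-1)^d \frac{(k+1+d)!}{(k+1-d)!\,(d!)^2} (q e^{u^2})^d. -/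
open Finset

lemma vand_s5 (a b N : ℕ) (h : b ≤ N) :
    ∑ i ∈ range (N + 1), a.choose i * b.choose i = (a + b).choose b := by
  rw [Nat.add_choose_eq, Finset.Nat.sum_antidiagonal_eq_sum_range_succ_mk]
  rw [← Finset.sum_subset (Finset.range_subset_range.2 (by omega) : range (b + 1) ⊆ range (N + 1))
    (by intro i _ hi; simp at hi ⊢; right; exact Nat.choose_eq_zero_of_lt (by omega))]
  refine Finset.sum_congr rfl fun i hi => ?_
  simp only [mem_range] at hi
  rw [Nat.choose_symm (by omega : i ≤ b)]

lemma coefA (n d j : ℕ) (h2 : 2 * d ≤ n) (hj : j ≤ n - 2 * d) :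
    ((n - 2 * d).choose j : ℂ) * (n.factorial : ℂ)
        / ((d.factorial : ℂ) ^ 2 * ((n - 2 * d).factorial : ℂ))
    = (n.choose (d + j) : ℂ) * ((d + j).choose d : ℂ) * ((n - (d + j)).choose d : ℂ) := by
  rw [Nat.cast_choose ℂ (hj : j ≤ n - 2 * d),
      Nat.cast_choose ℂ (by omega : d + j ≤ n),
      Nat.cast_choose ℂ (by omega : d ≤ d + j),
      Nat.cast_choose ℂ (by omega : d ≤ n - (d + j))]
  have h1 : d + j - d = j := by omega
  have h3 : n - (d + j) - d = n - 2 * d - j := by omega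
  rw [h1, h3]
  have f : ∀ m : ℕ, (m.factorial : ℂ) ≠ 0 := fun m => Nat.cast_ne_zero.2 m.factorial_ne_zero
  field_simp [f]

lemma coefB (n m j : ℕ) (hm : m ≤ n) (hj : j ≤ n - m) :
    ((n.choose m : ℂ)) * ((n - m).choose j : ℂ)
      = (n.choose (m + j) : ℂ) * ((m + j).choose m : ℂ) := by
  rw [Nat.cast_choose ℂ hm, Nat.cast_choose ℂ hj,
      Nat.cast_choose ℂ (by omega : m + j ≤ n),
      Nat.cast_choose ℂ (by omega : m ≤ m + j)]
  have h1 : m + j - m = j := by omega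
  have h3 : n - (m + j) = n - m - j := by omega
  rw [h1, h3]
  have f : ∀ m : ℕ, (m.factorial : ℂ) ≠ 0 := fun m => Nat.cast_ne_zero.2 m.factorial_ne_zero
  field_simp [f]

lemma stepA (n : ℕ) (x : ℂ) :
    ∑ d ∈ range (n / 2 + 1), (-1 : ℂ) ^ d * (x * (1 - x)) ^ d * (1 - 2 * x) ^ (n - 2 * d)
        * ((n.factorial : ℂ) / ((d.factorial : ℂ) ^ 2 * ((n - 2 * d).factorial : ℂ)))
    = ∑ m ∈ range (n + 1), (-x) ^ m * (1 - x) ^ (n - m) * (n.choose m : ℂ) ^ 2 := by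
  have per : ∀ d ∈ range (n / 2 + 1),
      (-1 : ℂ) ^ d * (x * (1 - x)) ^ d * (1 - 2 * x) ^ (n - 2 * d)
        * ((n.factorial : ℂ) / ((d.factorial : ℂ) ^ 2 * ((n - 2 * d).factorial : ℂ)))
      = ∑ m ∈ range (n + 1), (-x) ^ m * (1 - x) ^ (n - m)
          * ((n.choose m : ℂ) * ((m.choose d : ℂ) * (((n - m).choose d : ℂ)))) := by
    intro d hd
    simp only [mem_range] at hd
    have h2 : 2 * d ≤ n := by omega
    have hsplit : (1 - 2 * x) = (-x) + (1 - x) := by ring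
    rw [hsplit, add_pow]
    rw [Finset.mul_sum, Finset.sum_mul]
    conv_rhs => rw [Finset.range_eq_Ico]
    rw [← Finset.sum_subset (Finset.Ico_subset_Ico (by omega) (by omega) :
          Finset.Ico d (n - d + 1) ⊆ Finset.Ico 0 (n + 1)) ?zero]
    case zero =>
      intro m hm hm'
      simp only [Finset.mem_Ico] at hm hm'
      rcases (by omega : m < d ∨ n - m < d) with h | h
      · rw [Nat.choose_eq_zero_of_lt h]; push_cast; ring
      · rw [Nat.choose_eq_zero_of_lt h]; push_cast; ring
    conv_rhs => rw [Finset.sum_Ico_eq_sum_range]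
    rw [show n - d + 1 - d = n - 2 * d + 1 by omega]
    refine Finset.sum_congr rfl fun j hj => ?_
    simp only [mem_range] at hj
    have hj' : j ≤ n - 2 * d := by omega
    have hc := coefA n d j h2 hj'
    have e1 : n - (d + j) = d + (n - 2 * d - j) := by omega
    rw [e1] at hc ⊢
    rw [pow_add, pow_add, mul_pow]
    linear_combination ((-x) ^ d * (-x) ^ j * (1 - x) ^ d * (1 - x) ^ (n - 2 * d - j)) * hc
  rw [Finset.sum_congr rfl per, Finset.sum_comm]
  refine Finset.sum_congr rfl fun m hm => ?_
  simp only [mem_range] at hm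
  rw [Finset.sum_subset (Finset.range_subset_range.2 (by omega) :
        range (n / 2 + 1) ⊆ range (n + 1)) ?z2]
  case z2 =>
    intro d hd hd'
    simp only [mem_range] at hd hd'
    rcases (by omega : m < d ∨ n - m < d) with h | h
    · rw [Nat.choose_eq_zero_of_lt h]; push_cast; ring
    · rw [Nat.choose_eq_zero_of_lt h]; push_cast; ring
  rw [← Finset.mul_sum, ← Finset.mul_sum]
  have : ∑ d ∈ range (n + 1), (m.choose d : ℂ) * ((n - m).choose d : ℂ)
      = ((n.choose m : ℂ)) := by
    norm_cast
    rw [vand_s5 m (n - m) n (by omega), show m + (n - m) = n by omega,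
      Nat.choose_symm (by omega : m ≤ n)]
  rw [this]
  ring

lemma stepB (n : ℕ) (x : ℂ) :
    ∑ m ∈ range (n + 1), (-x) ^ m * (1 - x) ^ (n - m) * (n.choose m : ℂ) ^ 2
    = ∑ e ∈ range (n + 1),
        (-1 : ℂ) ^ e * (n.choose e : ℂ) * ((n + e).choose e : ℂ) * x ^ e := by
  have per : ∀ m ∈ range (n + 1),
      (-x) ^ m * (1 - x) ^ (n - m) * (n.choose m : ℂ) ^ 2
      = ∑ e ∈ range (n + 1), (-x) ^ e
          * ((n.choose e : ℂ) * ((n.choose m : ℂ) * ((e.choose m : ℂ)))) := by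
    intro m hm
    simp only [mem_range] at hm
    have hsplit : (1 - x) = (-x) + 1 := by ring
    rw [hsplit, add_pow, Finset.mul_sum, Finset.sum_mul]
    conv_rhs => rw [Finset.range_eq_Ico]
    rw [← Finset.sum_subset (Finset.Ico_subset_Ico (by omega) (by omega) :
          Finset.Ico m (n + 1) ⊆ Finset.Ico 0 (n + 1)) ?zero]
    case zero =>
      intro e he he'
      simp only [Finset.mem_Ico] at he he'
      rw [Nat.choose_eq_zero_of_lt (by omega : e < m)]
      push_cast; ring
    conv_rhs => rw [Finset.sum_Ico_eq_sum_range]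
    rw [show n + 1 - m = n - m + 1 by omega]
    refine Finset.sum_congr rfl fun j hj => ?_
    simp only [mem_range] at hj
    have hc := coefB n m j (by omega) (by omega)
    rw [pow_add]
    linear_combination ((-x) ^ m * (-x) ^ j * (n.choose m : ℂ)) * hc
  rw [Finset.sum_congr rfl per, Finset.sum_comm]
  refine Finset.sum_congr rfl fun e he => ?_
  simp only [mem_range] at he
  rw [← Finset.mul_sum, ← Finset.mul_sum]
  have : ∑ m ∈ range (n + 1), (n.choose m : ℂ) * ((e.choose m : ℂ))
      = (((n + e).choose e : ℂ)) := by
    norm_cast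
    rw [vand_s5 n e n (by omega)]
  rw [this, neg_pow]
  ring

lemma keylem (n : ℕ) (x : ℂ) :
    ∑ d ∈ range (n / 2 + 1), (-1 : ℂ) ^ d * (x * (1 - x)) ^ d * (1 - 2 * x) ^ (n - 2 * d)
        * ((n.factorial : ℂ) / ((d.factorial : ℂ) ^ 2 * ((n - 2 * d).factorial : ℂ)))
    = ∑ d ∈ range (n + 1),
        (-1 : ℂ) ^ d * (n.choose d : ℂ) * ((n + d).choose d : ℂ) * x ^ d :=
  (stepA n x).trans (stepB n x)

lemma coefR (n d : ℕ) (hd : d ≤ n) :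
    ((n + d).factorial : ℂ) / (((n - d).factorial : ℂ) * (d.factorial : ℂ) ^ 2)
    = (n.choose d : ℂ) * ((n + d).choose d : ℂ) := by
  rw [Nat.cast_choose ℂ hd, Nat.cast_choose ℂ (by omega : d ≤ n + d),
    show n + d - d = n by omega]
  have f : ∀ m : ℕ, (m.factorial : ℂ) ≠ 0 := fun m => Nat.cast_ne_zero.2 m.factorial_ne_zero
  field_simp [f]


/-- the fully evaluated form of equation (ad222) of Lemma 3.4. -/
theorem stmt5 (k : ℕ) (u1 u2 q : ℂ) :
    ∑ d ∈ Finset.range ((k + 1) / 2 + 1),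
      (q * Complex.exp (2 * u1 + u2) * (1 - q * Complex.exp u2)) ^ d
        * (Complex.I * Complex.exp u1 * (1 - 2 * q * Complex.exp u2)) ^ (k + 1 - 2 * d)
        / ((d.factorial : ℂ) ^ 2 * ((k + 1 - 2 * d).factorial : ℂ))
    = Complex.I ^ (k + 1) * Complex.exp (((k : ℂ) + 1) * u1) / (((k + 1).factorial : ℂ))
        * ∑ d ∈ Finset.range (k + 2),
            (-1 : ℂ) ^ d * ((k + 1 + d).factorial : ℂ)
              / (((k + 1 - d).factorial : ℂ) * (d.factorial : ℂ) ^ 2)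
              * (q * Complex.exp u2) ^ d := by
  set E := Complex.exp u1 with hEdef
  set X := q * Complex.exp u2 with hXdef
  have f : ∀ m : ℕ, (m.factorial : ℂ) ≠ 0 := fun m => Nat.cast_ne_zero.2 m.factorial_ne_zero
  have hE2 : Complex.exp (2 * u1 + u2) = E ^ 2 * Complex.exp u2 := by
    rw [Complex.exp_add, show (2 : ℂ) * u1 = u1 + u1 by ring, Complex.exp_add, hEdef]
    ring
  have hEn : Complex.exp (((k : ℂ) + 1) * u1) = E ^ (k + 1) := by
    rw [show ((k : ℂ) + 1) = ((k + 1 : ℕ) : ℂ) by push_cast; ring, Complex.exp_nat_mul]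
  have hterm : ∀ d ∈ range ((k + 1) / 2 + 1),
      (q * Complex.exp (2 * u1 + u2) * (1 - X)) ^ d
          * (Complex.I * E * (1 - 2 * X)) ^ (k + 1 - 2 * d)
          / ((d.factorial : ℂ) ^ 2 * ((k + 1 - 2 * d).factorial : ℂ))
      = Complex.I ^ (k + 1) * E ^ (k + 1) / (((k + 1).factorial : ℂ))
          * ((-1 : ℂ) ^ d * (X * (1 - X)) ^ d * (1 - 2 * X) ^ (k + 1 - 2 * d)
            * (((k + 1).factorial : ℂ)
              / ((d.factorial : ℂ) ^ 2 * ((k + 1 - 2 * d).factorial : ℂ)))) := by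
    intro d hd
    simp only [mem_range] at hd
    have h2 : 2 * d ≤ k + 1 := by omega
    have hI : Complex.I ^ (k + 1 - 2 * d) = Complex.I ^ (k + 1) * (-1 : ℂ) ^ d := by
      have h : Complex.I ^ (k + 1) = Complex.I ^ (k + 1 - 2 * d) * ((Complex.I ^ 2) ^ d) := by
        rw [← pow_mul, ← pow_add]
        congr 1
        omega
      rw [Complex.I_sq] at h
      rw [h, mul_assoc, ← mul_pow]
      norm_num
    have e1 : q * Complex.exp (2 * u1 + u2) * (1 - X) = E ^ 2 * (X * (1 - X)) := by
      rw [hE2, hXdef]; ring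
    have e2 : (Complex.I * E * (1 - 2 * X)) ^ (k + 1 - 2 * d)
        = Complex.I ^ (k + 1 - 2 * d) * E ^ (k + 1 - 2 * d) * (1 - 2 * X) ^ (k + 1 - 2 * d) := by
      rw [mul_pow, mul_pow]
    have hpow : E ^ (k + 1) = E ^ (2 * d) * E ^ (k + 1 - 2 * d) := by
      rw [← pow_add]; congr 1; omega
    rw [e1, e2, hI, mul_pow, ← pow_mul, hpow]
    field_simp [f]
  rw [show (1 : ℂ) - 2 * q * Complex.exp u2 = 1 - 2 * X by rw [hXdef]; ring]
  rw [Finset.sum_congr rfl hterm, ← Finset.mul_sum, keylem (k + 1) X, hEn]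
  congr 1
  refine Finset.sum_congr rfl fun d hd => ?_
  simp only [mem_range] at hd
  rw [show k + 1 + d = (k + 1) + d from rfl]
  have := coefR (k + 1) d (by omega)
  rw [mul_div_assoc, this]
  ring
end

section
/- Fix an integer k \ge 0, let \alpha \in \{1,2\}, and for complex u^1, u^2, q define h(u^1,u^2) := \theta^{P1}_{\alpha,k}(v^1(u), v^2(u); q) where v^1(u) = e^{u^1}(1+q e^{u^2}), v^2(u) = 2u^1+u^2. Then at every point with q e^{u^2} \ne 1, h satisfies the second-order PDE \partial^2 h/\partial (u^2)^2 = \frac{q e^{u^2}}{1-q e^{u^2}} \Big( \partial^2 h/\partial (u^1)^2 - 2\,\partial^2 h/\partial u^1 \partial u^2 \Big). -/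
/-- The deformed flat coordinate coefficients `θ^{P1}_{α,k}(v^1,v^2;q)` of the `P^1`
Frobenius manifold, for `α ∈ {1,2}`. -/
noncomputable def thetaP1 (α k : ℕ) (q v1 v2 : ℂ) : ℂ :=
  if α = 1 then
    ∑ d ∈ Finset.range (k / 2 + 1),
      (v2 - 2 * Hc d) * q ^ d * Complex.exp ((d : ℂ) * v2) * v1 ^ (k - 2 * d)
        / ((d.factorial : ℂ) ^ 2 * ((k - 2 * d).factorial : ℂ))
  else
    ∑ d ∈ Finset.range ((k + 1) / 2 + 1),
      q ^ d * Complex.exp ((d : ℂ) * v2) * v1 ^ (k + 1 - 2 * d)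
        / ((d.factorial : ℂ) ^ 2 * ((k + 1 - 2 * d).factorial : ℂ))

noncomputable section StmtSix

def Af (q : ℂ) (d m : ℕ) (y : ℂ) : ℂ :=
  Complex.exp ((d : ℂ) * y) * (1 + q * Complex.exp y) ^ m

def Af1 (q : ℂ) (d m : ℕ) (y : ℂ) : ℂ :=
  (d : ℂ) * (Complex.exp ((d : ℂ) * y) * (1 + q * Complex.exp y) ^ m)
    + (m : ℂ) * q * Complex.exp y * Complex.exp ((d : ℂ) * y) * (1 + q * Complex.exp y) ^ (m - 1)

def Af2 (q : ℂ) (d m : ℕ) (y : ℂ) : ℂ :=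
  (d : ℂ) ^ 2 * (Complex.exp ((d : ℂ) * y) * (1 + q * Complex.exp y) ^ m)
    + (m : ℂ) * (2 * (d : ℂ) + 1) * q * Complex.exp y * Complex.exp ((d : ℂ) * y)
        * (1 + q * Complex.exp y) ^ (m - 1)
    + (m : ℂ) * ((m - 1 : ℕ) : ℂ) * q ^ 2 * Complex.exp y * Complex.exp y
        * Complex.exp ((d : ℂ) * y) * (1 + q * Complex.exp y) ^ (m - 2)

lemma hP (q y : ℂ) : HasDerivAt (fun y => 1 + q * Complex.exp y) (q * Complex.exp y) y :=
  ((Complex.hasDerivAt_exp y).const_mul q).const_add 1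

lemma hE (d : ℕ) (y : ℂ) :
    HasDerivAt (fun y => Complex.exp ((d : ℂ) * y)) ((d : ℂ) * Complex.exp ((d : ℂ) * y)) y := by
  have := ((hasDerivAt_id y).const_mul (d : ℂ)).cexp
  simp only [id_eq, mul_one] at this
  refine this.congr_deriv ?_
  ring

lemma hAf (q : ℂ) (d m : ℕ) (y : ℂ) : HasDerivAt (Af q d m) (Af1 q d m y) y := by
  have h := (hE d y).fun_mul ((hP q y).fun_pow m)
  have hfun : Af q d m = fun y => Complex.exp ((d : ℂ) * y) * (1 + q * Complex.exp y) ^ m := rfl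
  rw [hfun]
  refine h.congr_deriv ?_
  simp only [Af1]
  ring

lemma hAf1 (q : ℂ) (d m : ℕ) (y : ℂ) : HasDerivAt (Af1 q d m) (Af2 q d m y) y := by
  have h1 := ((hE d y).fun_mul ((hP q y).fun_pow m)).const_mul (d : ℂ)
  have h2 := (((Complex.hasDerivAt_exp y).fun_mul (hE d y)).fun_mul
      ((hP q y).fun_pow (m - 1))).const_mul ((m : ℂ) * q)
  have h := h1.fun_add h2
  have hfun : Af1 q d m = fun y =>
      (d : ℂ) * (Complex.exp ((d : ℂ) * y) * (1 + q * Complex.exp y) ^ m)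
      + (m : ℂ) * q * (Complex.exp y * Complex.exp ((d : ℂ) * y)
          * (1 + q * Complex.exp y) ^ (m - 1)) := by
    funext y; simp only [Af1]; ring
  rw [hfun]
  refine h.congr_deriv ?_
  simp only [Af2]
  push_cast [Nat.sub_sub]
  ring

def cf (M d : ℕ) : ℂ := ((d.factorial : ℂ)) ^ 2 * (((M - 2 * d).factorial : ℂ))

def Ff (q : ℂ) (M D : ℕ) (y : ℂ) (d : ℕ) : ℂ :=
  if d ≤ D then
    (d : ℂ) ^ 2 * (q * Complex.exp y) ^ d * (q * Complex.exp y - 1)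
      * (1 + q * Complex.exp y) ^ (M - 2 * d) / cf M d
  else 0

set_option maxHeartbeats 1000000 in
lemma tele_step (q y : ℂ) (M D d : ℕ) (hD1 : 2 * D ≤ M) (hD2 : M ≤ 2 * D + 1)
    (hd : d ≤ D) :
    (1 - q * Complex.exp y) * (q ^ d * Af2 q d (M - 2 * d) y / cf M d)
      + q * Complex.exp y * (2 * (M : ℂ) * (q ^ d * Af1 q d (M - 2 * d) y / cf M d)
          - (M : ℂ) ^ 2 * (q ^ d * Af q d (M - 2 * d) y / cf M d))
      = Ff q M D y (d + 1) - Ff q M D y d := by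
  by_cases hc : 2 * (d + 1) ≤ M
  · obtain ⟨j, rfl⟩ : ∃ j, M = 2 * d + (j + 2) := ⟨M - 2 * d - 2, by omega⟩
    have hd1 : d + 1 ≤ D := by omega
    simp only [Af, Af1, Af2, Ff, cf, if_pos hd, if_pos hd1,
      show 2 * d + (j + 2) - 2 * d = j + 2 from by omega,
      show 2 * d + (j + 2) - 2 * (d + 1) = j from by omega,
      show j + 2 - 1 = j + 1 from rfl, show j + 2 - 2 = j from rfl,
      Nat.factorial_succ, Nat.cast_mul, Complex.exp_nat_mul]
    set A := ((d.factorial : ℕ) : ℂ) with hA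
    set B := ((j.factorial : ℕ) : ℂ) with hB
    set C1 := (((d + 1 : ℕ)) : ℂ) with hC1
    set C2 := (((j + 1 : ℕ)) : ℂ) with hC2
    set C3 := (((j + 2 : ℕ)) : ℂ) with hC3
    have hAne : A ≠ 0 := Nat.cast_ne_zero.2 d.factorial_ne_zero
    have hBne : B ≠ 0 := Nat.cast_ne_zero.2 j.factorial_ne_zero
    have h1 : C1 ≠ 0 := Nat.cast_ne_zero.2 (by omega)
    have h2 : C2 ≠ 0 := Nat.cast_ne_zero.2 (by omega)
    have h3 : C3 ≠ 0 := Nat.cast_ne_zero.2 (by omega)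
    field_simp [hAne, hBne, h1, h2, h3]
    rw [hC2, hC3]
    push_cast
    ring
  · have hd1 : ¬ (d + 1 ≤ D) := by omega
    have hfd : ((d.factorial : ℕ) : ℂ) ≠ 0 := Nat.cast_ne_zero.2 d.factorial_ne_zero
    have : M = 2 * d ∨ M = 2 * d + 1 := by omega
    rcases this with rfl | rfl
    · simp only [Af, Af1, Af2, Ff, cf, if_pos hd, if_neg hd1,
        show 2 * d - 2 * d = 0 from by omega, show 0 - 1 = 0 from rfl,
        show 0 - 2 = 0 from rfl, Nat.factorial_zero, Complex.exp_nat_mul]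
      field_simp [hfd]
      push_cast
      ring
    · simp only [Af, Af1, Af2, Ff, cf, if_pos hd, if_neg hd1,
        show 2 * d + 1 - 2 * d = 1 from by omega, show 1 - 1 = 0 from rfl,
        show 1 - 2 = 0 from rfl, Nat.factorial_one, Complex.exp_nat_mul]
      field_simp [hfd]
      push_cast
      ring

lemma cf_ne (M d : ℕ) : cf M d ≠ 0 :=
  mul_ne_zero (pow_ne_zero 2 (Nat.cast_ne_zero.2 d.factorial_ne_zero))
    (Nat.cast_ne_zero.2 (M - 2 * d).factorial_ne_zero)

lemma extra_step (q y : ℂ) (M d : ℕ) (h2d : 2 * d ≤ M) :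
    (1 + q * Complex.exp y) * (q ^ d * Af1 q d (M - 2 * d) y / cf M d)
      - (M : ℂ) * (q * Complex.exp y) * (q ^ d * Af q d (M - 2 * d) y / cf M d)
    = -((d : ℂ) * (q * Complex.exp y) ^ d * (q * Complex.exp y - 1)
        * (1 + q * Complex.exp y) ^ (M - 2 * d) / cf M d) := by
  have hcf := cf_ne M d
  by_cases hm : M = 2 * d
  · subst hm
    simp only [Af, Af1, cf, show 2 * d - 2 * d = 0 from by omega, show 0 - 1 = 0 from rfl,
      Nat.factorial_zero, Complex.exp_nat_mul] at *
    field_simp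
    push_cast
    ring
  · obtain ⟨j, rfl⟩ : ∃ j, M = 2 * d + (j + 1) := ⟨M - 2 * d - 1, by omega⟩
    simp only [Af, Af1, cf, show 2 * d + (j + 1) - 2 * d = j + 1 from by omega,
      show j + 1 - 1 = j from rfl, Complex.exp_nat_mul] at *
    field_simp
    push_cast
    ring

lemma over_step (q y : ℂ) (M D d : ℕ) (hd : d ≤ D) :
    (d : ℂ) * (q * Complex.exp y) ^ d * (q * Complex.exp y - 1)
        * (1 + q * Complex.exp y) ^ (M - 2 * d) / cf M d
      = (Hc d - Hc (d - 1)) * Ff q M D y d := by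
  rcases Nat.eq_zero_or_eq_succ_pred d with rfl | hm
  · simp [Ff, Hc]
  · obtain ⟨e, rfl⟩ : ∃ e, d = e + 1 := ⟨d - 1, hm⟩
    have hcf := cf_ne M (e + 1)
    have he : ((e : ℂ) + 1) ≠ 0 := by
      have : (((e + 1 : ℕ)) : ℂ) ≠ 0 := Nat.cast_ne_zero.2 (by omega)
      push_cast at this; exact this
    simp only [Ff, if_pos hd, Hc, show e + 1 - 1 = e from rfl, Finset.sum_range_succ]
    push_cast
    field_simp
    ring

lemma tele2_step (q y : ℂ) (M D d : ℕ) (hD1 : 2 * D ≤ M) (hD2 : M ≤ 2 * D + 1)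
    (hd : d ≤ D) :
    ((1 - q * Complex.exp y) * (Hc d * (q ^ d * Af2 q d (M - 2 * d) y / cf M d))
      + q * Complex.exp y * (2 * (M : ℂ) * (Hc d * (q ^ d * Af1 q d (M - 2 * d) y / cf M d))
          - (M : ℂ) ^ 2 * (Hc d * (q ^ d * Af q d (M - 2 * d) y / cf M d))))
      - ((1 + q * Complex.exp y) * (q ^ d * Af1 q d (M - 2 * d) y / cf M d)
          - (M : ℂ) * (q * Complex.exp y) * (q ^ d * Af q d (M - 2 * d) y / cf M d))
      = Hc d * Ff q M D y (d + 1) - Hc (d - 1) * Ff q M D y d := by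
  have h1 := tele_step q y M D d hD1 hD2 hd
  have h2 := extra_step q y M d (by omega)
  have h3 := over_step q y M D d hd
  linear_combination (Hc d) * h1 - h2 + h3

def Gf (q : ℂ) (M D : ℕ) (y : ℂ) : ℂ :=
  ∑ d ∈ Finset.range (D + 1), q ^ d * Af q d (M - 2 * d) y / cf M d
def Gf1 (q : ℂ) (M D : ℕ) (y : ℂ) : ℂ :=
  ∑ d ∈ Finset.range (D + 1), q ^ d * Af1 q d (M - 2 * d) y / cf M d
def Gf2 (q : ℂ) (M D : ℕ) (y : ℂ) : ℂ :=
  ∑ d ∈ Finset.range (D + 1), q ^ d * Af2 q d (M - 2 * d) y / cf M d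
def Gt (q : ℂ) (M D : ℕ) (y : ℂ) : ℂ :=
  ∑ d ∈ Finset.range (D + 1), Hc d * (q ^ d * Af q d (M - 2 * d) y / cf M d)
def Gt1 (q : ℂ) (M D : ℕ) (y : ℂ) : ℂ :=
  ∑ d ∈ Finset.range (D + 1), Hc d * (q ^ d * Af1 q d (M - 2 * d) y / cf M d)
def Gt2 (q : ℂ) (M D : ℕ) (y : ℂ) : ℂ :=
  ∑ d ∈ Finset.range (D + 1), Hc d * (q ^ d * Af2 q d (M - 2 * d) y / cf M d)

lemma Ff_zero (q : ℂ) (M D : ℕ) (y : ℂ) : Ff q M D y 0 = 0 := by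
  simp [Ff]

lemma Ff_top (q : ℂ) (M D : ℕ) (y : ℂ) : Ff q M D y (D + 1) = 0 := by
  simp [Ff]

lemma key1 (q y : ℂ) (M D : ℕ) (hD1 : 2 * D ≤ M) (hD2 : M ≤ 2 * D + 1) :
    (1 - q * Complex.exp y) * Gf2 q M D y
      + q * Complex.exp y * (2 * (M : ℂ) * Gf1 q M D y - (M : ℂ) ^ 2 * Gf q M D y) = 0 := by
  have : (1 - q * Complex.exp y) * Gf2 q M D y
      + q * Complex.exp y * (2 * (M : ℂ) * Gf1 q M D y - (M : ℂ) ^ 2 * Gf q M D y)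
      = ∑ d ∈ Finset.range (D + 1), (Ff q M D y (d + 1) - Ff q M D y d) := by
    rw [Gf, Gf1, Gf2, Finset.mul_sum, Finset.mul_sum, Finset.mul_sum,
      ← Finset.sum_sub_distrib, Finset.mul_sum, ← Finset.sum_add_distrib]
    refine Finset.sum_congr rfl fun d hd => ?_
    exact tele_step q y M D d hD1 hD2 (by simpa [Nat.lt_succ_iff] using hd)
  rw [this, Finset.sum_range_sub (Ff q M D y), Ff_zero, Ff_top, sub_zero]

lemma key2 (q y : ℂ) (M D : ℕ) (hD1 : 2 * D ≤ M) (hD2 : M ≤ 2 * D + 1) :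
    ((1 - q * Complex.exp y) * Gt2 q M D y
      + q * Complex.exp y * (2 * (M : ℂ) * Gt1 q M D y - (M : ℂ) ^ 2 * Gt q M D y))
      - ((1 + q * Complex.exp y) * Gf1 q M D y
          - (M : ℂ) * (q * Complex.exp y) * Gf q M D y) = 0 := by
  have : ((1 - q * Complex.exp y) * Gt2 q M D y
      + q * Complex.exp y * (2 * (M : ℂ) * Gt1 q M D y - (M : ℂ) ^ 2 * Gt q M D y))
      - ((1 + q * Complex.exp y) * Gf1 q M D y
          - (M : ℂ) * (q * Complex.exp y) * Gf q M D y)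
      = ∑ d ∈ Finset.range (D + 1),
          (Hc d * Ff q M D y (d + 1) - Hc (d - 1) * Ff q M D y d) := by
    rw [Gf, Gf1, Gt, Gt1, Gt2, Finset.mul_sum, Finset.mul_sum, Finset.mul_sum,
      ← Finset.sum_sub_distrib, Finset.mul_sum, ← Finset.sum_add_distrib,
      Finset.mul_sum, Finset.mul_sum, ← Finset.sum_sub_distrib, ← Finset.sum_sub_distrib]
    refine Finset.sum_congr rfl fun d hd => ?_
    exact tele2_step q y M D d hD1 hD2 (by simpa [Nat.lt_succ_iff] using hd)
  rw [this]
  have : ∀ d : ℕ, Hc d * Ff q M D y (d + 1) - Hc (d - 1) * Ff q M D y d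
      = (fun e => Hc (e - 1) * Ff q M D y e) (d + 1) - (fun e => Hc (e - 1) * Ff q M D y e) d := by
    intro d; simp
  simp only [this]
  rw [Finset.sum_range_sub (fun e => Hc (e - 1) * Ff q M D y e), Ff_zero, Ff_top]
  simp

lemma hGf (q : ℂ) (M D : ℕ) (y : ℂ) : HasDerivAt (Gf q M D) (Gf1 q M D y) y :=
  HasDerivAt.fun_sum fun d _ => ((hAf q d (M - 2 * d) y).const_mul (q ^ d)).div_const (cf M d)
lemma hGf1 (q : ℂ) (M D : ℕ) (y : ℂ) : HasDerivAt (Gf1 q M D) (Gf2 q M D y) y :=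
  HasDerivAt.fun_sum fun d _ => ((hAf1 q d (M - 2 * d) y).const_mul (q ^ d)).div_const (cf M d)
lemma hGt (q : ℂ) (M D : ℕ) (y : ℂ) : HasDerivAt (Gt q M D) (Gt1 q M D y) y :=
  HasDerivAt.fun_sum fun d _ =>
    (((hAf q d (M - 2 * d) y).const_mul (q ^ d)).div_const (cf M d)).const_mul (Hc d)
lemma hGt1 (q : ℂ) (M D : ℕ) (y : ℂ) : HasDerivAt (Gt1 q M D) (Gt2 q M D y) y :=
  HasDerivAt.fun_sum fun d _ =>
    (((hAf1 q d (M - 2 * d) y).const_mul (q ^ d)).div_const (cf M d)).const_mul (Hc d)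

lemma hasDerivAt_expConst (c C x : ℂ) :
    HasDerivAt (fun x => Complex.exp (c * x) * C) (c * (Complex.exp (c * x) * C)) x := by
  have := (((hasDerivAt_id x).const_mul c).cexp).mul_const C
  simp only [id_eq, mul_one] at this
  refine this.congr_deriv ?_
  ring

lemma hasDerivAt_expLin (c C1 C2 a x : ℂ) :
    HasDerivAt (fun x => Complex.exp (c * x) * ((2 * x + a) * C1 + C2))
      (Complex.exp (c * x) * ((2 * x + a) * (c * C1) + (c * C2 + 2 * C1))) x := by
  have h1 := ((hasDerivAt_id x).const_mul c).cexp
  simp only [id_eq, mul_one] at h1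
  have h2 := ((((hasDerivAt_id x).const_mul 2).add_const a).mul_const C1).add_const C2
  simp only [id_eq, mul_one] at h2
  have := h1.fun_mul h2
  refine this.congr_deriv ?_
  ring

lemma collect (q u1 u2 : ℂ) (d m M : ℕ) (hM : 2 * d + m = M) :
    q ^ d * Complex.exp ((d : ℂ) * (2 * u1 + u2))
        * (Complex.exp u1 * (1 + q * Complex.exp u2)) ^ m
      = Complex.exp ((M : ℂ) * u1)
        * (q ^ d * (Complex.exp ((d : ℂ) * u2) * (1 + q * Complex.exp u2) ^ m)) := by
  subst hM
  rw [mul_pow, ← Complex.exp_nat_mul,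
    show ((2 * d + m : ℕ) : ℂ) * u1 = 2 * (d : ℂ) * u1 + (m : ℂ) * u1 by push_cast; ring,
    Complex.exp_add,
    show (d : ℂ) * (2 * u1 + u2) = 2 * (d : ℂ) * u1 + (d : ℂ) * u2 by ring,
    Complex.exp_add]
  ring

end StmtSix

/-- `h(u) = θ^{P1}_{α,k}(v(u);q)` with the diagonal change of
variables `v^1 = e^{u^1}(1+q e^{u^2})`, `v^2 = 2u^1+u^2` satisfies the PDE
`∂²h/∂(u²)² = (q e^{u²}/(1-q e^{u²})) (∂²h/∂(u¹)² - 2 ∂²h/∂u¹∂u²)`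
wherever `q e^{u²} ≠ 1`. -/
theorem stmt6 (k : ℕ) (q : ℂ) (α : ℕ) (hα : α = 1 ∨ α = 2)
    (h : ℂ → ℂ → ℂ)
    (hdef : ∀ u1 u2 : ℂ,
      h u1 u2 = thetaP1 α k q (Complex.exp u1 * (1 + q * Complex.exp u2)) (2 * u1 + u2)) :
    ∀ u1 u2 : ℂ, q * Complex.exp u2 ≠ 1 →
      deriv (fun y => deriv (fun y' => h u1 y') y) u2
      = q * Complex.exp u2 / (1 - q * Complex.exp u2) *
          (deriv (fun x => deriv (fun x' => h x' u2) x) u1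
            - 2 * deriv (fun x => deriv (fun y => h x y) u2) u1) := by
  intro u1 u2 hne
  have hw : 1 - q * Complex.exp u2 ≠ 0 := sub_ne_zero_of_ne (Ne.symm hne)
  rcases hα with rfl | rfl
  · -- α = 1, M = k, D = k / 2
    have hrep : ∀ x y, h x y = Complex.exp ((k : ℂ) * x)
        * ((2 * x + y) * Gf q k (k / 2) y + (-2) * Gt q k (k / 2) y) := by
      intro x y
      rw [hdef x y]
      simp only [thetaP1, if_pos rfl]
      rw [Gf, Gt, Finset.mul_sum, Finset.mul_sum, ← Finset.sum_add_distrib, Finset.mul_sum]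
      refine Finset.sum_congr rfl fun d hd => ?_
      have hdle : d ≤ k / 2 := by simpa [Nat.lt_succ_iff] using hd
      have hM : 2 * d + (k - 2 * d) = k := by omega
      have hc := collect q x y d (k - 2 * d) k hM
      simp only [Af, cf]
      linear_combination ((2 * x + y - 2 * Hc d)
        / (((d.factorial : ℕ) : ℂ) ^ 2 * (((k - 2 * d).factorial : ℕ) : ℂ))) * hc
    have hd2 : ∀ x y, deriv (fun y' => h x y') y = Complex.exp ((k : ℂ) * x)
        * ((2 * x + y) * Gf1 q k (k / 2) y
            + (Gf q k (k / 2) y + (-2) * Gt1 q k (k / 2) y)) := by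
      intro x y
      have hfun : (fun y' => h x y') = fun y' => Complex.exp ((k : ℂ) * x)
          * ((2 * x + y') * Gf q k (k / 2) y' + (-2) * Gt q k (k / 2) y') :=
        funext fun y' => hrep x y'
      have hB := ((((hasDerivAt_id y).const_add (2 * x)).fun_mul (hGf q k (k / 2) y)).fun_add
          ((hGt q k (k / 2) y).const_mul (-2))).const_mul (Complex.exp ((k : ℂ) * x))
      simp only [id_eq] at hB
      rw [hfun, hB.deriv]
      ring
    have hd22 : deriv (fun y => deriv (fun y' => h u1 y') y) u2
        = Complex.exp ((k : ℂ) * u1) * (2 * Gf1 q k (k / 2) u2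
            + (2 * u1 + u2) * Gf2 q k (k / 2) u2 + (-2) * Gt2 q k (k / 2) u2) := by
      have hfun : (fun y => deriv (fun y' => h u1 y') y)
          = fun y => Complex.exp ((k : ℂ) * u1) * ((2 * u1 + y) * Gf1 q k (k / 2) y
              + (Gf q k (k / 2) y + (-2) * Gt1 q k (k / 2) y)) :=
        funext fun y => hd2 u1 y
      have hB := ((((hasDerivAt_id u2).const_add (2 * u1)).fun_mul (hGf1 q k (k / 2) u2)).fun_add
          ((hGf q k (k / 2) u2).fun_add
            ((hGt1 q k (k / 2) u2).const_mul (-2)))).const_mul (Complex.exp ((k : ℂ) * u1))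
      simp only [id_eq] at hB
      rw [hfun, hB.deriv]
      ring
    have hd1 : ∀ x, deriv (fun x' => h x' u2) x = Complex.exp ((k : ℂ) * x)
        * ((2 * x + u2) * ((k : ℂ) * Gf q k (k / 2) u2)
            + ((k : ℂ) * ((-2) * Gt q k (k / 2) u2) + 2 * Gf q k (k / 2) u2)) := by
      intro x
      have hfun : (fun x' => h x' u2) = fun x' => Complex.exp ((k : ℂ) * x')
          * ((2 * x' + u2) * Gf q k (k / 2) u2 + (-2) * Gt q k (k / 2) u2) :=
        funext fun x' => hrep x' u2
      rw [hfun, (hasDerivAt_expLin (k : ℂ) (Gf q k (k / 2) u2)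
        ((-2) * Gt q k (k / 2) u2) u2 x).deriv]
    have hd11 : deriv (fun x => deriv (fun x' => h x' u2) x) u1
        = Complex.exp ((k : ℂ) * u1)
            * ((2 * u1 + u2) * ((k : ℂ) * ((k : ℂ) * Gf q k (k / 2) u2))
              + ((k : ℂ) * ((k : ℂ) * ((-2) * Gt q k (k / 2) u2) + 2 * Gf q k (k / 2) u2)
                  + 2 * ((k : ℂ) * Gf q k (k / 2) u2))) := by
      have hfun : (fun x => deriv (fun x' => h x' u2) x)
          = fun x => Complex.exp ((k : ℂ) * x)
            * ((2 * x + u2) * ((k : ℂ) * Gf q k (k / 2) u2)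
                + ((k : ℂ) * ((-2) * Gt q k (k / 2) u2) + 2 * Gf q k (k / 2) u2)) :=
        funext hd1
      rw [hfun, (hasDerivAt_expLin (k : ℂ) ((k : ℂ) * Gf q k (k / 2) u2)
        ((k : ℂ) * ((-2) * Gt q k (k / 2) u2) + 2 * Gf q k (k / 2) u2) u2 u1).deriv]
    have hd12 : deriv (fun x => deriv (fun y => h x y) u2) u1
        = Complex.exp ((k : ℂ) * u1)
            * ((2 * u1 + u2) * ((k : ℂ) * Gf1 q k (k / 2) u2)
              + ((k : ℂ) * (Gf q k (k / 2) u2 + (-2) * Gt1 q k (k / 2) u2)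
                  + 2 * Gf1 q k (k / 2) u2)) := by
      have hfun : (fun x => deriv (fun y => h x y) u2)
          = fun x => Complex.exp ((k : ℂ) * x)
            * ((2 * x + u2) * Gf1 q k (k / 2) u2
                + (Gf q k (k / 2) u2 + (-2) * Gt1 q k (k / 2) u2)) :=
        funext fun x => hd2 x u2
      rw [hfun, (hasDerivAt_expLin (k : ℂ) (Gf1 q k (k / 2) u2)
        (Gf q k (k / 2) u2 + (-2) * Gt1 q k (k / 2) u2) u2 u1).deriv]
    rw [hd22, hd11, hd12]
    have hkey1 := key1 q u2 k (k / 2) (by omega) (by omega)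
    have hkey2 := key2 q u2 k (k / 2) (by omega) (by omega)
    rw [div_mul_eq_mul_div, eq_div_iff hw]
    linear_combination (Complex.exp ((k : ℂ) * u1) * (2 * u1 + u2)) * hkey1
      + (-2 * Complex.exp ((k : ℂ) * u1)) * hkey2
  · -- α = 2, M = k + 1, D = (k + 1) / 2
    have hrep : ∀ x y, h x y = Complex.exp (((k + 1 : ℕ) : ℂ) * x)
        * Gf q (k + 1) ((k + 1) / 2) y := by
      intro x y
      rw [hdef x y]
      simp only [thetaP1, if_neg (by norm_num : ¬(2 = 1))]
      rw [Gf, Finset.mul_sum]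
      refine Finset.sum_congr rfl fun d hd => ?_
      have hdle : d ≤ (k + 1) / 2 := by simpa [Nat.lt_succ_iff] using hd
      have hM : 2 * d + (k + 1 - 2 * d) = k + 1 := by omega
      have hc := collect q x y d (k + 1 - 2 * d) (k + 1) hM
      simp only [Af, cf]
      linear_combination (1
        / (((d.factorial : ℕ) : ℂ) ^ 2 * (((k + 1 - 2 * d).factorial : ℕ) : ℂ))) * hc
    have hd2 : ∀ x y, deriv (fun y' => h x y') y
        = Complex.exp (((k + 1 : ℕ) : ℂ) * x) * Gf1 q (k + 1) ((k + 1) / 2) y := by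
      intro x y
      have hfun : (fun y' => h x y') = fun y' => Complex.exp (((k + 1 : ℕ) : ℂ) * x)
          * Gf q (k + 1) ((k + 1) / 2) y' := funext fun y' => hrep x y'
      rw [hfun, ((hGf q (k + 1) ((k + 1) / 2) y).const_mul
        (Complex.exp (((k + 1 : ℕ) : ℂ) * x))).deriv]
    have hd22 : deriv (fun y => deriv (fun y' => h u1 y') y) u2
        = Complex.exp (((k + 1 : ℕ) : ℂ) * u1) * Gf2 q (k + 1) ((k + 1) / 2) u2 := by
      have hfun : (fun y => deriv (fun y' => h u1 y') y)
          = fun y => Complex.exp (((k + 1 : ℕ) : ℂ) * u1) * Gf1 q (k + 1) ((k + 1) / 2) y :=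
        funext fun y => hd2 u1 y
      rw [hfun, ((hGf1 q (k + 1) ((k + 1) / 2) u2).const_mul
        (Complex.exp (((k + 1 : ℕ) : ℂ) * u1))).deriv]
    have hd1 : ∀ x, deriv (fun x' => h x' u2) x
        = ((k + 1 : ℕ) : ℂ) * (Complex.exp (((k + 1 : ℕ) : ℂ) * x)
            * Gf q (k + 1) ((k + 1) / 2) u2) := by
      intro x
      have hfun : (fun x' => h x' u2) = fun x' => Complex.exp (((k + 1 : ℕ) : ℂ) * x')
          * Gf q (k + 1) ((k + 1) / 2) u2 := funext fun x' => hrep x' u2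
      rw [hfun, (hasDerivAt_expConst ((k + 1 : ℕ) : ℂ)
        (Gf q (k + 1) ((k + 1) / 2) u2) x).deriv]
    have hd11 : deriv (fun x => deriv (fun x' => h x' u2) x) u1
        = ((k + 1 : ℕ) : ℂ) * (((k + 1 : ℕ) : ℂ) * (Complex.exp (((k + 1 : ℕ) : ℂ) * u1)
            * Gf q (k + 1) ((k + 1) / 2) u2)) := by
      have hfun : (fun x => deriv (fun x' => h x' u2) x)
          = fun x => ((k + 1 : ℕ) : ℂ) * (Complex.exp (((k + 1 : ℕ) : ℂ) * x)
              * Gf q (k + 1) ((k + 1) / 2) u2) := funext hd1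
      rw [hfun, ((hasDerivAt_expConst ((k + 1 : ℕ) : ℂ)
        (Gf q (k + 1) ((k + 1) / 2) u2) u1).const_mul ((k + 1 : ℕ) : ℂ)).deriv]
    have hd12 : deriv (fun x => deriv (fun y => h x y) u2) u1
        = ((k + 1 : ℕ) : ℂ) * (Complex.exp (((k + 1 : ℕ) : ℂ) * u1)
            * Gf1 q (k + 1) ((k + 1) / 2) u2) := by
      have hfun : (fun x => deriv (fun y => h x y) u2)
          = fun x => Complex.exp (((k + 1 : ℕ) : ℂ) * x) * Gf1 q (k + 1) ((k + 1) / 2) u2 :=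
        funext fun x => hd2 x u2
      rw [hfun, (hasDerivAt_expConst ((k + 1 : ℕ) : ℂ)
        (Gf1 q (k + 1) ((k + 1) / 2) u2) u1).deriv]
    rw [hd22, hd11, hd12]
    have hkey := key1 q u2 (k + 1) ((k + 1) / 2) (by omega) (by omega)
    rw [div_mul_eq_mul_div, eq_div_iff hw]
    linear_combination Complex.exp (((k + 1 : ℕ) : ℂ) * u1) * hkey
end

section
/- For complex v^1, v^2, q, z define the entire-function series P(z) := \sum_{d \ge 0} (q e^{v^2})^d z^{2d} e^{z v^1}/(d!)^2 and Q(z) := \sum_{d \ge 1} d\,(q e^{v^2})^d z^{2d-1} e^{z v^1}/(d!)^2, and set G(z,w) := P(z)Q(w) + Q(z)P(w). Then for all complex v^1, v^2, q, z, w: (i) (v^1 \partial_{v^1} + 2\partial_{v^2}) G(z,w) = (z\partial_z + w\partial_w + 1) G(z,w), and (ii) (v^1 \partial_{v^1} + 2\partial_{v^2}) G(z,w) = (z+w)\big[ 2 q e^{v^2} P(z)P(w) + v^1 ( P(z)Q(w) + Q(z)P(w) ) + 2 Q(z)Q(w) \big]. -/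
open Complex

lemma summable_aux (R : ℝ)  :
    Summable (fun d : ℕ => (d : ℝ) * R ^ d / d.factorial) := by
  rw [← summable_nat_add_iff 1]
  have h := (Real.summable_pow_div_factorial R).mul_left R
  refine h.congr fun d => ?_
  have : ((d + 1).factorial : ℝ) = (d + 1) * d.factorial := by
    rw [Nat.factorial_succ]; push_cast; ring
  rw [this]
  have h1 : ((d : ℝ) + 1) ≠ 0 := by positivity
  have h2 : (d.factorial : ℝ) ≠ 0 := Nat.cast_ne_zero.2 d.factorial_ne_zero
  field_simp
  push_cast
  ring

lemma summable_cseries (c : ℕ → ℂ) (hc : ∀ d, ‖c d‖ ≤ 1 / d.factorial) (x : ℂ) :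
    Summable (fun d : ℕ => c d * x ^ d) := by
  refine Summable.of_norm_bounded
    (Real.summable_pow_div_factorial ‖x‖) fun d => ?_
  rw [norm_mul, norm_pow]
  calc ‖c d‖ * ‖x‖ ^ d ≤ (1 / d.factorial) * ‖x‖ ^ d := by
        gcongr; exact hc d
    _ = ‖x‖ ^ d / d.factorial := by ring

lemma hasDerivAt_cseries (c : ℕ → ℂ) (hc : ∀ d, ‖c d‖ ≤ 1 / d.factorial) (x : ℂ) :
    HasDerivAt (fun y : ℂ => ∑' d : ℕ, c d * y ^ d)
      (∑' d : ℕ, ((d : ℂ) + 1) * c (d + 1) * x ^ d) x := by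
  set R : ℝ := ‖x‖ + 1 with hRdef
  have hR1 : (1 : ℝ) ≤ R := le_add_of_nonneg_left (norm_nonneg x)
  have hbound : ∀ (n : ℕ) (y : ℂ), y ∈ Metric.ball (0 : ℂ) R →
      ‖c n * ((n : ℂ) * y ^ (n - 1))‖ ≤ (n : ℝ) * R ^ n / n.factorial := by
    intro n y hy
    have hyR : ‖y‖ ≤ R := le_of_lt (by simpa [Metric.mem_ball] using hy)
    rw [norm_mul, norm_mul, norm_pow, Complex.norm_natCast]
    calc ‖c n‖ * ((n : ℝ) * ‖y‖ ^ (n - 1))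
        ≤ (1 / n.factorial) * ((n : ℝ) * R ^ (n - 1)) := by
          gcongr
          exact hc n
      _ ≤ (1 / n.factorial) * ((n : ℝ) * R ^ n) := by
          have h := pow_le_pow_right₀ hR1 (Nat.sub_le n 1)
          have h0 : (0:ℝ) ≤ 1 / n.factorial := by positivity
          have hn : (0:ℝ) ≤ (n:ℝ) := Nat.cast_nonneg n
          exact mul_le_mul_of_nonneg_left (mul_le_mul_of_nonneg_left h hn) h0
      _ = (n : ℝ) * R ^ n / n.factorial := by ring
  have key : HasDerivAt (fun y : ℂ => ∑' d : ℕ, c d * y ^ d)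
      (∑' d : ℕ, c d * ((d : ℂ) * x ^ (d - 1))) x := by
    refine hasDerivAt_tsum_of_isPreconnected (summable_aux R)
      (Metric.isOpen_ball) (convex_ball (0 : ℂ) R).isPreconnected
      (fun n y _ => (hasDerivAt_pow n y).const_mul (c n)) hbound ?_
      (summable_cseries c hc x) ?_
    · simp [Metric.mem_ball, hRdef]
    · simp [Metric.mem_ball, hRdef]
  have hsum : Summable (fun d : ℕ => c d * ((d : ℂ) * x ^ (d - 1))) := by
    refine Summable.of_norm_bounded (summable_aux R) fun n =>
      hbound n x (by simp [Metric.mem_ball, hRdef])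
  have : (∑' d : ℕ, c d * ((d : ℂ) * x ^ (d - 1)))
      = ∑' d : ℕ, ((d : ℂ) + 1) * c (d + 1) * x ^ d := by
    rw [Summable.tsum_eq_zero_add hsum]
    simp only [Nat.cast_zero, zero_mul, mul_zero, zero_add, Nat.add_sub_cancel]
    exact tsum_congr fun d => by push_cast; ring
  rwa [this] at key

noncomputable def cfF (d : ℕ) : ℂ := 1 / ((d.factorial : ℂ)) ^ 2
noncomputable def cgF (d : ℕ) : ℂ := 1 / ((d.factorial : ℂ) * ((d + 1).factorial : ℂ))
noncomputable def chF (d : ℕ) : ℂ := 1 / ((d.factorial : ℂ) * ((d + 2).factorial : ℂ))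

noncomputable def fcF (x : ℂ) : ℂ := ∑' d : ℕ, cfF d * x ^ d
noncomputable def gcF (x : ℂ) : ℂ := ∑' d : ℕ, cgF d * x ^ d
noncomputable def hcF (x : ℂ) : ℂ := ∑' d : ℕ, chF d * x ^ d

lemma fact_ne (d : ℕ) : ((d.factorial : ℂ)) ≠ 0 := Nat.cast_ne_zero.2 d.factorial_ne_zero

lemma cfF_bound (d : ℕ) : ‖cfF d‖ ≤ 1 / d.factorial := by
  rw [cfF, norm_div, norm_one, norm_pow, Complex.norm_natCast]
  have h1 : (1 : ℝ) ≤ (d.factorial : ℝ) := by exact_mod_cast d.factorial_pos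
  rw [div_le_div_iff₀ (by positivity) (by positivity)]
  nlinarith

lemma cgF_bound (d : ℕ) : ‖cgF d‖ ≤ 1 / d.factorial := by
  rw [cgF, norm_div, norm_one, norm_mul, Complex.norm_natCast, Complex.norm_natCast]
  have h1 : (1 : ℝ) ≤ (d.factorial : ℝ) := by exact_mod_cast d.factorial_pos
  have h2 : (1 : ℝ) ≤ ((d + 1).factorial : ℝ) := by exact_mod_cast (d + 1).factorial_pos
  rw [div_le_div_iff₀ (by positivity) (by positivity)]
  nlinarith

lemma chF_bound (d : ℕ) : ‖chF d‖ ≤ 1 / d.factorial := by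
  rw [chF, norm_div, norm_one, norm_mul, Complex.norm_natCast, Complex.norm_natCast]
  have h1 : (1 : ℝ) ≤ (d.factorial : ℝ) := by exact_mod_cast d.factorial_pos
  have h2 : (1 : ℝ) ≤ ((d + 2).factorial : ℝ) := by exact_mod_cast (d + 2).factorial_pos
  rw [div_le_div_iff₀ (by positivity) (by positivity)]
  nlinarith

lemma hasDerivAt_fcF (x : ℂ) : HasDerivAt fcF (gcF x) x := by
  have h := hasDerivAt_cseries cfF cfF_bound x
  have : (∑' d : ℕ, ((d : ℂ) + 1) * cfF (d + 1) * x ^ d) = gcF x := by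
    refine tsum_congr fun d => ?_
    have hfs : (((d + 1).factorial : ℂ)) = ((d : ℂ) + 1) * (d.factorial : ℂ) := by
      rw [Nat.factorial_succ]; push_cast; ring
    rw [cfF, cgF, hfs]
    have h1 : ((d : ℂ) + 1) ≠ 0 := Nat.cast_add_one_ne_zero d
    field_simp [fact_ne d]
  rwa [this] at h

lemma hasDerivAt_gcF (x : ℂ) : HasDerivAt gcF (hcF x) x := by
  have h := hasDerivAt_cseries cgF cgF_bound x
  have : (∑' d : ℕ, ((d : ℂ) + 1) * cgF (d + 1) * x ^ d) = hcF x := by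
    refine tsum_congr fun d => ?_
    have hfs : (((d + 1).factorial : ℂ)) = ((d : ℂ) + 1) * (d.factorial : ℂ) := by
      rw [Nat.factorial_succ]; push_cast; ring
    have heq : d + 1 + 1 = d + 2 := by ring
    rw [cgF, chF, hfs, heq]
    have h1 : ((d : ℂ) + 1) ≠ 0 := Nat.cast_add_one_ne_zero d
    field_simp [fact_ne d, fact_ne (d + 2)]
  rwa [this] at h

lemma coeff_rel (d : ℕ) : cgF (d + 1) + chF d = cfF (d + 1) := by
  rw [cgF, chF, cfF]
  have e1 : ((d + 1 + 1).factorial : ℂ) = ((d : ℂ) + 2) * ((d + 1).factorial : ℂ) := by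
    rw [Nat.factorial_succ]; push_cast; ring
  have e3 : ((d + 1).factorial : ℂ) = ((d : ℂ) + 1) * (d.factorial : ℂ) := by
    rw [Nat.factorial_succ]; push_cast; ring
  rw [e1, e3]
  have h1 : ((d : ℂ) + 1) ≠ 0 := Nat.cast_add_one_ne_zero d
  have h2 : ((d : ℂ) + 2) ≠ 0 := by
    have : ((d + 2 : ℕ) : ℂ) ≠ 0 := Nat.cast_ne_zero.2 (by omega)
    push_cast at this; exact this
  have hF := fact_ne d
  have hAF : ((d : ℂ) + 1) * (d.factorial : ℂ) ≠ 0 := mul_ne_zero h1 hF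
  have hX : ((d : ℂ) + 1) * (d.factorial : ℂ)
      * (((d : ℂ) + 2) * (((d : ℂ) + 1) * (d.factorial : ℂ))) ≠ 0 :=
    mul_ne_zero hAF (mul_ne_zero h2 hAF)
  have hY : (d.factorial : ℂ) * (((d : ℂ) + 2) * (((d : ℂ) + 1) * (d.factorial : ℂ))) ≠ 0 :=
    mul_ne_zero hF (mul_ne_zero h2 hAF)
  rw [div_add_div _ _ hX hY, div_eq_div_iff (mul_ne_zero hX hY) (pow_ne_zero 2 hAF)]
  ring

set_option maxHeartbeats 1000000 in
lemma gcF_rel (x : ℂ) : gcF x + x * hcF x = fcF x := by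
  have hg : Summable (fun d : ℕ => cgF d * x ^ d) := summable_cseries _ cgF_bound x
  have hf : Summable (fun d : ℕ => cfF d * x ^ d) := summable_cseries _ cfF_bound x
  have hg1 : Summable (fun d : ℕ => cgF (d + 1) * x ^ (d + 1)) :=
    (summable_nat_add_iff 1).2 hg
  have hh : Summable (fun d : ℕ => x * (chF d * x ^ d)) :=
    (summable_cseries _ chF_bound x).mul_left x
  have e1 : gcF x = cgF 0 * x ^ 0 + ∑' d : ℕ, cgF (d + 1) * x ^ (d + 1) := by
    rw [gcF]; exact Summable.tsum_eq_zero_add hg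
  have e2 : x * hcF x = ∑' d : ℕ, x * (chF d * x ^ d) := by rw [hcF, tsum_mul_left]
  have e3 : fcF x = cfF 0 * x ^ 0 + ∑' d : ℕ, cfF (d + 1) * x ^ (d + 1) := by
    rw [fcF]; exact Summable.tsum_eq_zero_add hf
  rw [e1, e2, e3, add_assoc, ← Summable.tsum_add hg1 hh]
  congr 1
  · simp [cgF, cfF]
  · exact tsum_congr fun d => by rw [← coeff_rel d]; ring

/-- `P(z) = ∑_{d≥0} (q e^{v²})^d z^{2d} e^{z v¹}/(d!)²`. -/
noncomputable def Pfun (q v1 v2 z : ℂ) : ℂ :=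
  ∑' d : ℕ, (q * Complex.exp v2) ^ d * z ^ (2 * d) * Complex.exp (z * v1)
      / ((d.factorial : ℂ)) ^ 2

/-- `Q(z) = ∑_{d≥1} d (q e^{v²})^d z^{2d-1} e^{z v¹}/(d!)²`. -/
noncomputable def Qfun (q v1 v2 z : ℂ) : ℂ :=
  ∑' d : ℕ, ((d : ℂ) + 1) * (q * Complex.exp v2) ^ (d + 1) * z ^ (2 * d + 1)
      * Complex.exp (z * v1) / (((d + 1).factorial : ℂ)) ^ 2

/-- `G(z,w) = P(z)Q(w) + Q(z)P(w)`. -/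
noncomputable def Gfun (q v1 v2 z w : ℂ) : ℂ :=
  Pfun q v1 v2 z * Qfun q v1 v2 w + Qfun q v1 v2 z * Pfun q v1 v2 w

lemma Pfun_eq (q v1 v2 z : ℂ) :
    Pfun q v1 v2 z = Complex.exp (z * v1) * fcF (q * Complex.exp v2 * z ^ 2) := by
  rw [Pfun, fcF, ← tsum_mul_left]
  refine tsum_congr fun d => ?_
  have hsplit : (q * Complex.exp v2 * z ^ 2) ^ d
      = (q * Complex.exp v2) ^ d * z ^ (2 * d) := by rw [mul_pow, ← pow_mul]
  rw [cfF, hsplit]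
  ring

lemma Qfun_eq (q v1 v2 z : ℂ) :
    Qfun q v1 v2 z = Complex.exp (z * v1) * (q * Complex.exp v2)
      * (z * gcF (q * Complex.exp v2 * z ^ 2)) := by
  have step : Complex.exp (z * v1) * (q * Complex.exp v2)
      * (z * gcF (q * Complex.exp v2 * z ^ 2))
      = ∑' d : ℕ, Complex.exp (z * v1) * (q * Complex.exp v2)
          * (z * (cgF d * (q * Complex.exp v2 * z ^ 2) ^ d)) := by
    rw [gcF, ← tsum_mul_left, ← tsum_mul_left]
  rw [step, Qfun]
  refine tsum_congr fun d => ?_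
  have hfs : (((d + 1).factorial : ℂ)) = ((d : ℂ) + 1) * (d.factorial : ℂ) := by
    rw [Nat.factorial_succ]; push_cast; ring
  have h1 : ((d : ℂ) + 1) ≠ 0 := Nat.cast_add_one_ne_zero d
  have hsplit : (q * Complex.exp v2 * z ^ 2) ^ d
      = (q * Complex.exp v2) ^ d * z ^ (2 * d) := by rw [mul_pow, ← pow_mul]
  rw [cgF, hfs, hsplit, pow_succ (q * Complex.exp v2), pow_succ z]
  field_simp [fact_ne d, h1]

lemma hP_v1 (q v1 v2 z : ℂ) :
    HasDerivAt (fun x => Pfun q x v2 z) (z * Pfun q v1 v2 z) v1 := by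
  have hfn : (fun x => Pfun q x v2 z)
      = fun x => Complex.exp (z * x) * fcF (q * Complex.exp v2 * z ^ 2) :=
    funext fun x => Pfun_eq q x v2 z
  rw [hfn, Pfun_eq]
  have h1 : HasDerivAt (fun x : ℂ => z * x) z v1 := by
    simpa using (hasDerivAt_id v1).const_mul z
  have h2 := (h1.cexp).mul_const (fcF (q * Complex.exp v2 * z ^ 2))
  refine h2.congr_deriv ?_
  ring

lemma hQ_v1 (q v1 v2 z : ℂ) :
    HasDerivAt (fun x => Qfun q x v2 z) (z * Qfun q v1 v2 z) v1 := by
  have hfn : (fun x => Qfun q x v2 z)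
      = fun x => Complex.exp (z * x) * (q * Complex.exp v2)
          * (z * gcF (q * Complex.exp v2 * z ^ 2)) :=
    funext fun x => Qfun_eq q x v2 z
  rw [hfn, Qfun_eq]
  have h1 : HasDerivAt (fun x : ℂ => z * x) z v1 := by
    simpa using (hasDerivAt_id v1).const_mul z
  have h2 := ((h1.cexp).mul_const (q * Complex.exp v2)).mul_const
    (z * gcF (q * Complex.exp v2 * z ^ 2))
  refine h2.congr_deriv ?_
  ring

lemma hP_v2 (q v1 v2 z : ℂ) :
    HasDerivAt (fun y => Pfun q v1 y z) (z * Qfun q v1 v2 z) v2 := by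
  have hfn : (fun y => Pfun q v1 y z)
      = fun y => Complex.exp (z * v1) * fcF (q * Complex.exp y * z ^ 2) :=
    funext fun y => Pfun_eq q v1 y z
  rw [hfn, Qfun_eq]
  have hin : HasDerivAt (fun y => q * Complex.exp y * z ^ 2)
      (q * Complex.exp v2 * z ^ 2) v2 := by
    simpa using ((Complex.hasDerivAt_exp v2).const_mul q).mul_const (z ^ 2)
  have h2 := ((hasDerivAt_fcF (q * Complex.exp v2 * z ^ 2)).comp v2 hin).const_mul
    (Complex.exp (z * v1))
  refine h2.congr_deriv ?_
  ring

lemma hQ_v2 (q v1 v2 z : ℂ) :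
    HasDerivAt (fun y => Qfun q v1 y z)
      (z * (q * Complex.exp v2) * Pfun q v1 v2 z) v2 := by
  have hfn : (fun y => Qfun q v1 y z)
      = fun y => Complex.exp (z * v1) * (q * Complex.exp y)
          * (z * gcF (q * Complex.exp y * z ^ 2)) :=
    funext fun y => Qfun_eq q v1 y z
  rw [hfn, Pfun_eq]
  have hin : HasDerivAt (fun y => q * Complex.exp y * z ^ 2)
      (q * Complex.exp v2 * z ^ 2) v2 := by
    simpa using ((Complex.hasDerivAt_exp v2).const_mul q).mul_const (z ^ 2)
  have hA : HasDerivAt (fun y => Complex.exp (z * v1) * (q * Complex.exp y))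
      (Complex.exp (z * v1) * (q * Complex.exp v2)) v2 := by
    simpa [mul_assoc] using
      ((Complex.hasDerivAt_exp v2).const_mul q).const_mul (Complex.exp (z * v1))
  have hB : HasDerivAt (fun y => z * gcF (q * Complex.exp y * z ^ 2))
      (z * (hcF (q * Complex.exp v2 * z ^ 2) * (q * Complex.exp v2 * z ^ 2))) v2 := by
    simpa [Function.comp] using
      ((hasDerivAt_gcF (q * Complex.exp v2 * z ^ 2)).comp v2 hin).const_mul z
  have h2 := hA.mul hB
  refine h2.congr_deriv (Eq.symm ?_)
  linear_combination (Complex.exp (z * v1) * (q * Complex.exp v2) * z)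
    * (gcF_rel (q * Complex.exp v2 * z ^ 2)).symm

lemma hP_z (q v1 v2 z : ℂ) :
    HasDerivAt (fun s => Pfun q v1 v2 s)
      (v1 * Pfun q v1 v2 z + 2 * Qfun q v1 v2 z) z := by
  have hfn : (fun s => Pfun q v1 v2 s)
      = fun s => Complex.exp (s * v1) * fcF (q * Complex.exp v2 * s ^ 2) :=
    funext fun s => Pfun_eq q v1 v2 s
  rw [hfn, Pfun_eq, Qfun_eq]
  have hE : HasDerivAt (fun s : ℂ => Complex.exp (s * v1))
      (Complex.exp (z * v1) * v1) z := (hasDerivAt_mul_const v1).cexp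
  have hin : HasDerivAt (fun s : ℂ => q * Complex.exp v2 * s ^ 2)
      (q * Complex.exp v2 * (2 * z)) z := by
    simpa using (hasDerivAt_pow 2 z).const_mul (q * Complex.exp v2)
  have hF : HasDerivAt (fun s : ℂ => fcF (q * Complex.exp v2 * s ^ 2))
      (gcF (q * Complex.exp v2 * z ^ 2) * (q * Complex.exp v2 * (2 * z))) z := by
    simpa [Function.comp_def] using (hasDerivAt_fcF (q * Complex.exp v2 * z ^ 2)).comp z hin
  have h2 := hE.mul hF
  refine h2.congr_deriv ?_
  ring

lemma hQ_z (q v1 v2 z : ℂ) :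
    HasDerivAt (fun s => Qfun q v1 v2 s)
      (v1 * Qfun q v1 v2 z + 2 * (q * Complex.exp v2) * Pfun q v1 v2 z
        - Complex.exp (z * v1) * (q * Complex.exp v2)
            * gcF (q * Complex.exp v2 * z ^ 2)) z := by
  have hfn : (fun s => Qfun q v1 v2 s)
      = fun s => Complex.exp (s * v1) * (q * Complex.exp v2)
          * (s * gcF (q * Complex.exp v2 * s ^ 2)) :=
    funext fun s => Qfun_eq q v1 v2 s
  rw [hfn, Qfun_eq, Pfun_eq]
  have hE : HasDerivAt (fun s : ℂ => Complex.exp (s * v1))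
      (Complex.exp (z * v1) * v1) z := (hasDerivAt_mul_const v1).cexp
  have hEa := hE.mul_const (q * Complex.exp v2)
  have hin : HasDerivAt (fun s : ℂ => q * Complex.exp v2 * s ^ 2)
      (q * Complex.exp v2 * (2 * z)) z := by
    simpa using (hasDerivAt_pow 2 z).const_mul (q * Complex.exp v2)
  have hG : HasDerivAt (fun s : ℂ => gcF (q * Complex.exp v2 * s ^ 2))
      (hcF (q * Complex.exp v2 * z ^ 2) * (q * Complex.exp v2 * (2 * z))) z := by
    simpa [Function.comp_def] using (hasDerivAt_gcF (q * Complex.exp v2 * z ^ 2)).comp z hin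
  have hsg : HasDerivAt (fun s : ℂ => s * gcF (q * Complex.exp v2 * s ^ 2))
      (gcF (q * Complex.exp v2 * z ^ 2)
        + z * (hcF (q * Complex.exp v2 * z ^ 2) * (q * Complex.exp v2 * (2 * z)))) z := by
    have := (hasDerivAt_id' z).mul hG; simp only [one_mul] at this; exact this
  have h2 := hEa.mul hsg
  refine h2.congr_deriv (Eq.symm ?_)
  linear_combination (2 * (q * Complex.exp v2) * Complex.exp (z * v1))
    * (gcF_rel (q * Complex.exp v2 * z ^ 2)).symm

/-- the key homogeneity computation in the proof of Lemma 3.2: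
(i) `(v¹ ∂_{v¹} + 2∂_{v²}) G(z,w) = (z∂_z + w∂_w + 1) G(z,w)`,
(ii) `(v¹ ∂_{v¹} + 2∂_{v²}) G(z,w)
      = (z+w)[2q e^{v²} P(z)P(w) + v¹(P(z)Q(w)+Q(z)P(w)) + 2Q(z)Q(w)]`. -/
theorem stmt8 (v1 v2 q z w : ℂ) :
    (v1 * deriv (fun x => Gfun q x v2 z w) v1 + 2 * deriv (fun y => Gfun q v1 y z w) v2
      = z * deriv (fun s => Gfun q v1 v2 s w) z + w * deriv (fun t => Gfun q v1 v2 z t) w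
        + Gfun q v1 v2 z w)
    ∧ (v1 * deriv (fun x => Gfun q x v2 z w) v1 + 2 * deriv (fun y => Gfun q v1 y z w) v2
      = (z + w) * (2 * q * Complex.exp v2 * Pfun q v1 v2 z * Pfun q v1 v2 w
          + v1 * (Pfun q v1 v2 z * Qfun q v1 v2 w + Qfun q v1 v2 z * Pfun q v1 v2 w)
          + 2 * Qfun q v1 v2 z * Qfun q v1 v2 w)) := by
  have hG1 : HasDerivAt (fun x => Gfun q x v2 z w)
      ((z * Pfun q v1 v2 z) * Qfun q v1 v2 w + Pfun q v1 v2 z * (w * Qfun q v1 v2 w)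
        + ((z * Qfun q v1 v2 z) * Pfun q v1 v2 w + Qfun q v1 v2 z * (w * Pfun q v1 v2 w))) v1 :=
    ((hP_v1 q v1 v2 z).mul (hQ_v1 q v1 v2 w)).add ((hQ_v1 q v1 v2 z).mul (hP_v1 q v1 v2 w))
  have hG2 : HasDerivAt (fun y => Gfun q v1 y z w)
      ((z * Qfun q v1 v2 z) * Qfun q v1 v2 w
          + Pfun q v1 v2 z * (w * (q * Complex.exp v2) * Pfun q v1 v2 w)
        + ((z * (q * Complex.exp v2) * Pfun q v1 v2 z) * Pfun q v1 v2 w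
          + Qfun q v1 v2 z * (w * Qfun q v1 v2 w))) v2 :=
    ((hP_v2 q v1 v2 z).mul (hQ_v2 q v1 v2 w)).add ((hQ_v2 q v1 v2 z).mul (hP_v2 q v1 v2 w))
  have hG3 : HasDerivAt (fun s => Gfun q v1 v2 s w)
      ((v1 * Pfun q v1 v2 z + 2 * Qfun q v1 v2 z) * Qfun q v1 v2 w
        + (v1 * Qfun q v1 v2 z + 2 * (q * Complex.exp v2) * Pfun q v1 v2 z
            - Complex.exp (z * v1) * (q * Complex.exp v2)
                * gcF (q * Complex.exp v2 * z ^ 2)) * Pfun q v1 v2 w) z :=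
    (((hP_z q v1 v2 z).mul_const (Qfun q v1 v2 w)).add
      ((hQ_z q v1 v2 z).mul_const (Pfun q v1 v2 w)))
  have hG4 : HasDerivAt (fun t => Gfun q v1 v2 z t)
      (Pfun q v1 v2 z * (v1 * Qfun q v1 v2 w + 2 * (q * Complex.exp v2) * Pfun q v1 v2 w
            - Complex.exp (w * v1) * (q * Complex.exp v2)
                * gcF (q * Complex.exp v2 * w ^ 2))
        + Qfun q v1 v2 z * (v1 * Pfun q v1 v2 w + 2 * Qfun q v1 v2 w)) w :=
    (((hQ_z q v1 v2 w).const_mul (Pfun q v1 v2 z)).add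
      ((hP_z q v1 v2 w).const_mul (Qfun q v1 v2 z)))
  rw [Gfun, hG1.deriv, hG2.deriv, hG3.deriv, hG4.deriv]
  have relz := Qfun_eq q v1 v2 z
  have relw := Qfun_eq q v1 v2 w
  constructor
  · linear_combination (-(Pfun q v1 v2 w)) * relz - (Pfun q v1 v2 z) * relw
  · ring
end
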